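/- arXiv:1705.09797 — 9 statements merged into one kernel-verified Lean document; each statement's English description precedes it below -/
import Mathlib

section
/- Let G be a finite connected simple graph and let s be an arbitrary vertex of G. Then for every vertex q of G, the cluster-diameter of the layering partition of G with respect to q is at most three times the cluster-diameter of the layering partition with respect to s, i.e., Δ_q(G) ≤ 3·Δ_s(G). -/
/-!
Fix `s` and let `lcaLevel G s x y` be the largest `j` such that `x` and `y` are joined by a
walk staying at distance at least `j` from `s`: the layer of the lowest common ancestor of
the clusters of `x` and `y` in the tree of clusters of `LP(G, s)`. Then
`ρ(x, y) = d(s,x) + d(s,y) - 2 lcaLevel G s x y` is a tree metric with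
`ρ ≤ d_G ≤ ρ + Δ_s(G)`. If `u, v` lie in a cluster of `LP(G, q)` at layer `k`, a walk joining
them outside the ball `B_{k-1}(q)` passes through a vertex `x` whose tree distance to `q` is at
most that of the tree geodesic `[u, v]`. Since `k ≤ d(q, x) ≤ ρ(q, x) + Δ_s` and
`ρ(q, u), ρ(q, v) ≤ k`, this forces `ρ(u, v) ≤ 2 Δ_s`, hence `d(u, v) ≤ 3 Δ_s`.
-/

open SimpleGraph

/-- Two vertices `u, v` lie in the same cluster of the layering partition of `G`
with respect to start vertex `s`: they are in the same layer and are connected by a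
walk all of whose vertices are at distance at least `d_G(s,u)` from `s`. -/
def SameCluster {V : Type} (G : SimpleGraph V) (s u v : V) : Prop :=
  G.dist s u = G.dist s v ∧
  ∃ p : G.Walk u v, ∀ w ∈ p.support, G.dist s u ≤ G.dist s w

open scoped Classical in
/-- The cluster-diameter `Δ_s(G)` of the layering partition of `G` w.r.t. `s`:
the largest distance in `G` between two vertices lying in a common cluster. -/
noncomputable def clusterDiam {V : Type} [Fintype V] (G : SimpleGraph V) (s : V) : ℕ :=
  Finset.univ.sup fun p : V × V =>
    if SameCluster G s p.1 p.2 then G.dist p.1 p.2 else 0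

namespace SimpleGraph

variable {V : Type} {G : SimpleGraph V} {s : V}

/-- `x` and `y` are joined by a walk outside the ball `B_{j-1}(s)`. -/
def ReachableOutside (G : SimpleGraph V) (s : V) (j : ℕ) (x y : V) : Prop :=
  ∃ p : G.Walk x y, ∀ w ∈ p.support, j ≤ G.dist s w

section ReachableOutside

variable {i j : ℕ} {x y z : V}

lemma ReachableOutside.le_dist_left (h : ReachableOutside G s j x y) : j ≤ G.dist s x :=
  h.elim fun p hp => hp x p.start_mem_support

lemma ReachableOutside.symm (h : ReachableOutside G s j x y) : ReachableOutside G s j y x :=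
  h.elim fun p hp => ⟨p.reverse, fun w hw => hp w (by simpa using hw)⟩

lemma ReachableOutside.le_dist_right (h : ReachableOutside G s j x y) : j ≤ G.dist s y :=
  h.symm.le_dist_left

lemma ReachableOutside.trans (hxy : ReachableOutside G s j x y)
    (hyz : ReachableOutside G s j y z) : ReachableOutside G s j x z := by
  obtain ⟨p, hp⟩ := hxy
  obtain ⟨q, hq⟩ := hyz
  exact ⟨p.append q, fun w hw => (p.mem_support_append_iff q).mp hw |>.elim (hp w) (hq w)⟩

lemma ReachableOutside.mono (hij : i ≤ j) (h : ReachableOutside G s j x y) :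
    ReachableOutside G s i x y :=
  h.elim fun p hp => ⟨p, fun w hw => hij.trans (hp w hw)⟩

lemma reachableOutside_refl (h : j ≤ G.dist s x) : ReachableOutside G s j x x :=
  ⟨Walk.nil, by simpa using h⟩

lemma reachableOutside_of_adj (hxy : G.Adj x y) (hx : j ≤ G.dist s x) (hy : j ≤ G.dist s y) :
    ReachableOutside G s j x y :=
  ⟨Walk.cons hxy Walk.nil, by simp [hx, hy]⟩

end ReachableOutside

lemma Walk.exists_dist_eq_reachableOutside {j : ℕ} {u v : V} (p : G.Walk u v)
    (hu : j ≤ G.dist s u) (hv : G.dist s v ≤ j) :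
    ∃ x ∈ p.support, G.dist s x = j ∧ ReachableOutside G s j u x := by
  induction p with
  | nil => exact ⟨_, by simp, le_antisymm hv hu, reachableOutside_refl hu⟩
  | @cons a b _ hab q ih =>
    by_cases hj : G.dist s a = j
    · exact ⟨a, by simp, hj, reachableOutside_refl hu⟩
    have hb : j ≤ G.dist s b := by rcases hab.diff_dist_adj (u := s) with h | h | h <;> omega
    obtain ⟨x, hx, hxj, hux⟩ := ih hb hv
    exact ⟨x, by simp [hx], hxj, (reachableOutside_of_adj hab hu hb).trans hux⟩

lemma exists_dist_eq_reachableOutside_dist_add_le (hG : G.Connected) {j : ℕ} {x : V}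
    (hj : j ≤ G.dist s x) :
    ∃ x', G.dist s x' = j ∧ ReachableOutside G s j x x' ∧ G.dist x x' + j ≤ G.dist s x := by
  classical
  obtain ⟨p, hp⟩ := hG.exists_walk_length_eq_dist x s
  obtain ⟨x', hx', hx'j, hxx'⟩ := p.exists_dist_eq_reachableOutside hj (by simp)
  refine ⟨x', hx'j, hxx', ?_⟩
  have htake : G.dist x x' ≤ (p.takeUntil x' hx').length := dist_le _
  have hdrop : G.dist x' s ≤ (p.dropUntil x' hx').length := dist_le _
  have hsplit := congrArg Walk.length (p.take_spec hx')
  rw [Walk.length_append] at hsplit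
  rw [dist_comm] at hdrop hp
  omega

open scoped Classical in
noncomputable def lcaLevel (G : SimpleGraph V) (s x y : V) : ℕ :=
  Nat.findGreatest (ReachableOutside G s · x y) (G.dist s x)

section lcaLevel

variable {j : ℕ} {x y : V}

lemma reachableOutside_lcaLevel (hG : G.Connected) (x y : V) :
    ReachableOutside G s (lcaLevel G s x y) x y := by
  classical
  obtain ⟨p⟩ := hG.preconnected x y
  exact Nat.findGreatest_spec (P := (ReachableOutside G s · x y)) (Nat.zero_le _)
    ⟨p, fun _ _ => Nat.zero_le _⟩

lemma le_lcaLevel (h : ReachableOutside G s j x y) : j ≤ lcaLevel G s x y := by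
  classical
  exact Nat.le_findGreatest h.le_dist_left h

lemma lcaLevel_comm (hG : G.Connected) (x y : V) : lcaLevel G s x y = lcaLevel G s y x :=
  le_antisymm (le_lcaLevel (reachableOutside_lcaLevel hG x y).symm)
    (le_lcaLevel (reachableOutside_lcaLevel hG y x).symm)

lemma min_lcaLevel_le_lcaLevel (hG : G.Connected) (x y z : V) :
    min (lcaLevel G s x y) (lcaLevel G s y z) ≤ lcaLevel G s x z :=
  le_lcaLevel <| ((reachableOutside_lcaLevel hG x y).mono (min_le_left _ _)).trans
    ((reachableOutside_lcaLevel hG y z).mono (min_le_right _ _))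

lemma min_dist_le_lcaLevel_of_adj (hxy : G.Adj x y) :
    min (G.dist s x) (G.dist s y) ≤ lcaLevel G s x y :=
  le_lcaLevel (reachableOutside_of_adj hxy (min_le_left _ _) (min_le_right _ _))

end lcaLevel

lemma Walk.dist_add_dist_le_length_add_two_mul_lcaLevel (hG : G.Connected) {x y : V}
    (p : G.Walk x y) :
    G.dist s x + G.dist s y ≤ p.length + 2 * lcaLevel G s x y := by
  induction p with
  | @nil a =>
    have := le_lcaLevel (reachableOutside_refl (G := G) (s := s) (le_refl (G.dist s a)))
    rw [Walk.length_nil]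
    omega
  | @cons a b c hab q ih =>
    have hab' := min_dist_le_lcaLevel_of_adj (s := s) hab
    have hac := min_lcaLevel_le_lcaLevel (s := s) hG a b c
    have hbc := (reachableOutside_lcaLevel (s := s) hG b c).le_dist_left
    rw [Walk.length_cons]
    rcases hab.diff_dist_adj (u := s) with h | h | h <;> omega

lemma dist_add_dist_le_dist_add_two_mul_lcaLevel (hG : G.Connected) (x y : V) :
    G.dist s x + G.dist s y ≤ G.dist x y + 2 * lcaLevel G s x y := by
  obtain ⟨p, hp⟩ := hG.exists_walk_length_eq_dist x y
  exact hp ▸ p.dist_add_dist_le_length_add_two_mul_lcaLevel hG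

lemma dist_le_clusterDiam [Fintype V] {x y : V} (h : SameCluster G s x y) :
    G.dist x y ≤ clusterDiam G s := by
  classical
  exact (if_pos h).symm.le.trans <| Finset.le_sup (f := fun p : V × V =>
    if SameCluster G s p.1 p.2 then G.dist p.1 p.2 else 0) (Finset.mem_univ (x, y))

/-- Project `x` and `y` to the layer `lcaLevel G s x y`; the projections share a cluster. -/
lemma dist_add_two_mul_lcaLevel_le [Fintype V] (hG : G.Connected) (x y : V) :
    G.dist x y + 2 * lcaLevel G s x y ≤ G.dist s x + G.dist s y + clusterDiam G s := by
  have hxy := reachableOutside_lcaLevel (s := s) hG x y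
  obtain ⟨x', hx'j, hxx', hx'⟩ :=
    exists_dist_eq_reachableOutside_dist_add_le hG hxy.le_dist_left
  obtain ⟨y', hy'j, hyy', hy'⟩ :=
    exists_dist_eq_reachableOutside_dist_add_le hG hxy.le_dist_right
  have hcluster : SameCluster G s x' y' := by
    obtain ⟨p, hp⟩ := (hxx'.symm.trans hxy).trans hyy'
    exact ⟨hx'j.trans hy'j.symm, p, hx'j ▸ hp⟩
  have h₁ : G.dist x y ≤ G.dist x x' + G.dist x' y := hG.dist_triangle
  have h₂ : G.dist x' y ≤ G.dist x' y' + G.dist y' y := hG.dist_triangle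
  have h₃ := dist_le_clusterDiam hcluster
  rw [dist_comm (u := y')] at h₂
  omega

/-- The walk descends to the layer `max (lcaLevel G s u q) (lcaLevel G s u v)`; the vertex where
it first does so works because, by the ultrametric inequality `min_lcaLevel_le_lcaLevel`, the
hypothesis forces `lcaLevel G s v q ≤ min (lcaLevel G s u q) (lcaLevel G s u v)`. -/
lemma Walk.exists_mem_support_two_mul_lcaLevel_of_le_max (hG : G.Connected) {u v : V}
    (W : G.Walk u v) (q : V)
    (hvq : lcaLevel G s v q ≤ max (lcaLevel G s u q) (lcaLevel G s u v)) :
    ∃ x ∈ W.support, G.dist s x + lcaLevel G s u q + lcaLevel G s v q ≤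
      2 * lcaLevel G s x q + lcaLevel G s u v := by
  classical
  set j := max (lcaLevel G s u q) (lcaLevel G s u v)
  have huq := reachableOutside_lcaLevel (s := s) hG u q
  have huv := reachableOutside_lcaLevel (s := s) hG u v
  have hj : j ≤ G.dist s u := max_le huq.le_dist_left huv.le_dist_left
  have hdip : ∃ w ∈ W.support, G.dist s w ≤ j := by
    by_contra! hW
    have := le_lcaLevel (j := lcaLevel G s u v + 1)
      ⟨W, fun w hw => (le_max_right _ _).trans_lt (hW w hw)⟩
    omega
  obtain ⟨w, hw, hwj⟩ := hdip
  obtain ⟨x, hx, hxj, hux⟩ := (W.takeUntil w hw).exists_dist_eq_reachableOutside hj hwj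
  have hxq : lcaLevel G s u q ≤ lcaLevel G s x q :=
    le_lcaLevel ((hux.symm.mono (le_max_left _ _)).trans huq)
  have h₁ := min_lcaLevel_le_lcaLevel (s := s) hG u q v
  have h₂ := min_lcaLevel_le_lcaLevel (s := s) hG u v q
  rw [lcaLevel_comm hG q v] at h₁
  exact ⟨x, W.support_takeUntil_subset_support hw hx, by omega⟩

/-- In the tree metric `ρ`, every walk from `u` to `v` meets a vertex `x` with
`2 ρ(q, x) ≤ ρ(u, q) + ρ(v, q) - ρ(u, v)`. -/
lemma Walk.exists_mem_support_two_mul_lcaLevel (hG : G.Connected) {u v : V}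
    (W : G.Walk u v) (q : V) :
    ∃ x ∈ W.support, G.dist s x + lcaLevel G s u q + lcaLevel G s v q ≤
      2 * lcaLevel G s x q + lcaLevel G s u v := by
  by_cases hvq : lcaLevel G s v q ≤ max (lcaLevel G s u q) (lcaLevel G s u v)
  · exact W.exists_mem_support_two_mul_lcaLevel_of_le_max hG q hvq
  obtain ⟨x, hx, hxq⟩ :=
    W.reverse.exists_mem_support_two_mul_lcaLevel_of_le_max (s := s) hG q (by omega)
  rw [lcaLevel_comm hG v u] at hxq
  exact ⟨x, by simpa using hx, by omega⟩

end SimpleGraph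

/-- For every finite connected graph `G`, every vertex `s` and every vertex `q`,
`Δ_q(G) ≤ 3 ⬝ Δ_s(G)`. -/
theorem clusterDiam_le_three_mul {V : Type} [Fintype V] (G : SimpleGraph V)
    (hG : G.Connected) (s q : V) :
    clusterDiam G q ≤ 3 * clusterDiam G s := by
  classical
  refine Finset.sup_le fun ⟨u, v⟩ _ => ?_
  dsimp only
  split_ifs with huv
  · obtain ⟨hlayer, W, hW⟩ := huv
    obtain ⟨x, hx, hxq⟩ := W.exists_mem_support_two_mul_lcaLevel (s := s) hG q
    have hux := hW x hx
    have h₁ := dist_add_dist_le_dist_add_two_mul_lcaLevel (s := s) hG u q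
    have h₂ := dist_add_dist_le_dist_add_two_mul_lcaLevel (s := s) hG v q
    have h₃ := dist_add_two_mul_lcaLevel_le (s := s) hG u v
    have h₄ := dist_add_two_mul_lcaLevel_le (s := s) hG x q
    rw [dist_comm (u := u)] at h₁
    rw [dist_comm (u := v)] at h₂
    rw [dist_comm (u := x)] at h₄
    omega
  · exact Nat.zero_le _
end

section
/- For every finite connected simple graph G, the maximum cluster-diameter over all layering partitions of G is at most three times the minimum cluster-diameter over all layering partitions of G, i.e., Δ̂(G) ≤ 3·Δ(G). -/
open SimpleGraph

/-- `Δ̂(G)`: the maximum cluster-diameter over all layering partitions of `G`. -/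
noncomputable def maxClusterDiam {V : Type} [Fintype V] (G : SimpleGraph V) : ℕ :=
  Finset.univ.sup fun s : V => clusterDiam G s

/-- `Δ(G)`: the minimum cluster-diameter over all layering partitions of `G`. -/
noncomputable def minClusterDiam {V : Type} [Fintype V] (G : SimpleGraph V) : ℕ :=
  sInf (Set.range fun s : V => clusterDiam G s)

/-! Fix a root `s` and let `m(x, y)` (`meetLevel`) be the largest `ℓ` such that `x` and `y` are
joined by a walk at distance at least `ℓ` from `s`. Since `min (m x y) (m y z) ≤ m x z`, the
quantity `τ(x, y) = d(s, x) + d(s, y) - 2 m(x, y)` (`layeringTreeDist`) is a tree metric (the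
distance between clusters in the tree of `LP(G, s)`), and `τ ≤ d ≤ τ + Δ_s`: descending from `x`
and `y` to layer `m(x, y)` lands in one cluster. If `u, v` lie in a cluster of `LP(G, t)` at
layer `k`, every vertex `w` of a walk joining them outside `B_{k-1}(t)` has `τ(t, w) ≥ k - Δ_s`;
in a tree this forces the Gromov product `(u|v)_t ≥ k - Δ_s`, so `τ(u, v) ≤ 2 Δ_s` and
`d(u, v) ≤ 3 Δ_s`. -/

namespace SimpleGraph

variable {V : Type} {G : SimpleGraph V}

lemma Connected.exists_adj_dist_add_one_eq (hG : G.Connected) {s x : V} (hsx : s ≠ x) :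
    ∃ y, G.Adj y x ∧ G.dist s y + 1 = G.dist s x := by
  obtain ⟨p, hp⟩ := hG.exists_walk_length_eq_dist x s
  have hp_nil : ¬ p.Nil := Walk.not_nil_of_ne hsx.symm
  refine ⟨p.snd, (p.adj_snd hp_nil).symm, ?_⟩
  have h_tail : G.dist p.snd s ≤ p.tail.length := dist_le _
  have h_len : p.tail.length + 1 = p.length := p.length_tail_add_one hp_nil
  have h_tri : G.dist x s ≤ G.dist x p.snd + G.dist p.snd s := hG.dist_triangle
  have h_adj : G.dist x p.snd = 1 := dist_eq_one_iff_adj.mpr (p.adj_snd hp_nil)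
  rw [dist_comm (u := s), dist_comm (u := s)]
  omega

/-- `x` and `y` are joined by a walk staying outside the ball `B_{ℓ-1}(s)`. -/
def JoinedAbove (G : SimpleGraph V) (s : V) (ℓ : ℕ) (x y : V) : Prop :=
  ∃ p : G.Walk x y, ∀ w ∈ p.support, ℓ ≤ G.dist s w

namespace JoinedAbove

variable {s x y z : V} {ℓ : ℕ}

lemma refl (h : ℓ ≤ G.dist s x) : G.JoinedAbove s ℓ x x :=
  ⟨.nil, by simpa using h⟩

lemma symm (h : G.JoinedAbove s ℓ x y) : G.JoinedAbove s ℓ y x := by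
  obtain ⟨p, hp⟩ := h
  exact ⟨p.reverse, by simpa using hp⟩

lemma trans (hxy : G.JoinedAbove s ℓ x y) (hyz : G.JoinedAbove s ℓ y z) :
    G.JoinedAbove s ℓ x z := by
  obtain ⟨p, hp⟩ := hxy
  obtain ⟨q, hq⟩ := hyz
  refine ⟨p.append q, fun w hw => ?_⟩
  rcases (Walk.mem_support_append_iff p q).1 hw with hw | hw
  exacts [hp w hw, hq w hw]

lemma mono {ℓ' : ℕ} (h : G.JoinedAbove s ℓ x y) (hℓ : ℓ' ≤ ℓ) : G.JoinedAbove s ℓ' x y := by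
  obtain ⟨p, hp⟩ := h
  exact ⟨p, fun w hw => hℓ.trans (hp w hw)⟩

lemma le_dist_left (h : G.JoinedAbove s ℓ x y) : ℓ ≤ G.dist s x := by
  obtain ⟨p, hp⟩ := h
  exact hp x p.start_mem_support

lemma le_dist_right (h : G.JoinedAbove s ℓ x y) : ℓ ≤ G.dist s y :=
  h.symm.le_dist_left

end JoinedAbove

lemma Adj.joinedAbove {x y : V} (h : G.Adj x y) (s : V) :
    G.JoinedAbove s (min (G.dist s x) (G.dist s y)) x y := by
  refine ⟨.cons h .nil, fun w hw => ?_⟩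
  simp only [Walk.support_cons, Walk.support_nil, List.mem_cons, List.not_mem_nil,
    or_false] at hw
  rcases hw with rfl | rfl
  exacts [min_le_left _ _, min_le_right _ _]

lemma Connected.joinedAbove_zero (hG : G.Connected) (s x y : V) : G.JoinedAbove s 0 x y :=
  ⟨(hG.preconnected x y).some, fun _ _ => Nat.zero_le _⟩

lemma Connected.exists_joinedAbove_of_dist_eq (hG : G.Connected) (s : V) (ℓ : ℕ) :
    ∀ (n : ℕ) (x : V), G.dist s x = ℓ + n →
      ∃ x', G.dist s x' = ℓ ∧ G.dist x' x ≤ n ∧ G.JoinedAbove s ℓ x' x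
  | 0, x, hx => ⟨x, hx, by simp, .refl hx.ge⟩
  | n + 1, x, hx => by
    have hsx : s ≠ x := by
      rintro rfl
      simp at hx
    obtain ⟨y, hyx, hy⟩ := hG.exists_adj_dist_add_one_eq hsx
    obtain ⟨x', hx', hx'y, hjoin⟩ := hG.exists_joinedAbove_of_dist_eq s ℓ n y (by omega)
    have h_tri : G.dist x' x ≤ G.dist x' y + G.dist y x := hG.dist_triangle
    have h_yx : G.dist y x = 1 := dist_eq_one_iff_adj.mpr hyx
    exact ⟨x', hx', by omega, hjoin.trans ((hyx.joinedAbove s).mono (by omega))⟩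

lemma Walk.dist_add_dist_le_length {x y w : V} (p : G.Walk x y) (hw : w ∈ p.support) :
    G.dist x w + G.dist w y ≤ p.length := by
  classical
  calc G.dist x w + G.dist w y ≤ (p.takeUntil w hw).length + (p.dropUntil w hw).length :=
        add_le_add (dist_le _) (dist_le _)
    _ = p.length := by rw [← Walk.length_append, p.take_spec hw]

open scoped Classical in
noncomputable def meetLevel (G : SimpleGraph V) (s x y : V) : ℕ :=
  Nat.findGreatest (fun ℓ => G.JoinedAbove s ℓ x y) (G.dist s x)

variable {s : V}

lemma le_meetLevel_iff (hG : G.Connected) {x y : V} {ℓ : ℕ} :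
    ℓ ≤ G.meetLevel s x y ↔ G.JoinedAbove s ℓ x y := by
  classical
  constructor
  · intro h
    exact (Nat.findGreatest_spec (P := fun ℓ => G.JoinedAbove s ℓ x y) (Nat.zero_le _)
      (hG.joinedAbove_zero s x y)).mono h
  · exact fun h => Nat.le_findGreatest h.le_dist_left h

lemma joinedAbove_meetLevel (hG : G.Connected) (x y : V) :
    G.JoinedAbove s (G.meetLevel s x y) x y :=
  (le_meetLevel_iff hG).1 le_rfl

lemma meetLevel_le_left (hG : G.Connected) (x y : V) : G.meetLevel s x y ≤ G.dist s x :=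
  (joinedAbove_meetLevel hG x y).le_dist_left

lemma meetLevel_le_right (hG : G.Connected) (x y : V) : G.meetLevel s x y ≤ G.dist s y :=
  (joinedAbove_meetLevel hG x y).le_dist_right

lemma meetLevel_comm (hG : G.Connected) (x y : V) : G.meetLevel s x y = G.meetLevel s y x :=
  le_antisymm ((le_meetLevel_iff hG).2 (joinedAbove_meetLevel hG x y).symm)
    ((le_meetLevel_iff hG).2 (joinedAbove_meetLevel hG y x).symm)

lemma meetLevel_self (hG : G.Connected) (x : V) : G.meetLevel s x x = G.dist s x :=
  le_antisymm (meetLevel_le_left hG x x) ((le_meetLevel_iff hG).2 (.refl le_rfl))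

lemma min_meetLevel_le_meetLevel (hG : G.Connected) (x y z : V) :
    min (G.meetLevel s x y) (G.meetLevel s y z) ≤ G.meetLevel s x z :=
  (le_meetLevel_iff hG).2 <| ((joinedAbove_meetLevel hG x y).mono (min_le_left _ _)).trans
    ((joinedAbove_meetLevel hG y z).mono (min_le_right _ _))

lemma Adj.min_dist_le_meetLevel (hG : G.Connected) {x y : V} (h : G.Adj x y) :
    min (G.dist s x) (G.dist s y) ≤ G.meetLevel s x y :=
  (le_meetLevel_iff hG).2 (h.joinedAbove s)

/-- The four-point condition that makes `layeringTreeDist s` a tree metric. -/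
lemma meetLevel_four_point (hG : G.Connected) (t a b c : V) :
    min (G.meetLevel s a b + G.meetLevel s t c) (G.meetLevel s b c + G.meetLevel s t a) ≤
      G.meetLevel s a c + G.meetLevel s t b := by
  have hac := min_meetLevel_le_meetLevel (s := s) hG a b c
  have htb := min_meetLevel_le_meetLevel (s := s) hG t a b
  have htb' := min_meetLevel_le_meetLevel (s := s) hG t c b
  have hac' := min_meetLevel_le_meetLevel (s := s) hG a t c
  have hat := meetLevel_comm (s := s) hG a t
  have hcb := meetLevel_comm (s := s) hG c b
  omega

noncomputable def layeringTreeDist (G : SimpleGraph V) (s x y : V) : ℤ :=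
  G.dist s x + G.dist s y - 2 * G.meetLevel s x y

lemma layeringTreeDist_self (hG : G.Connected) (x : V) : G.layeringTreeDist s x x = 0 := by
  simp only [layeringTreeDist, meetLevel_self hG]
  ring

lemma Adj.layeringTreeDist_le_one (hG : G.Connected) {x y : V} (h : G.Adj x y) :
    G.layeringTreeDist s x y ≤ 1 := by
  have hmin := h.min_dist_le_meetLevel (s := s) hG
  have hdiff := h.diff_dist_adj (u := s)
  simp only [layeringTreeDist]
  omega

lemma layeringTreeDist_le_dist (hG : G.Connected) (x y : V) :
    G.layeringTreeDist s x y ≤ G.dist x y := by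
  classical
  obtain ⟨p, hp⟩ := hG.exists_walk_length_eq_dist x y
  obtain ⟨w, hw, hw_min⟩ := p.support.toFinset.exists_min_image (G.dist s)
    ⟨x, List.mem_toFinset.2 p.start_mem_support⟩
  rw [List.mem_toFinset] at hw
  have h_meet : G.dist s w ≤ G.meetLevel s x y :=
    (le_meetLevel_iff hG).2 ⟨p, fun z hz => hw_min z (List.mem_toFinset.2 hz)⟩
  have h_split := p.dist_add_dist_le_length hw
  have hx : G.dist s x ≤ G.dist s w + G.dist w x := hG.dist_triangle
  have hy : G.dist s y ≤ G.dist s w + G.dist w y := hG.dist_triangle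
  have hwx : G.dist w x = G.dist x w := dist_comm
  simp only [layeringTreeDist]
  omega

lemma layeringTreeDist_le_of_walk (hG : G.Connected) (t : V) (K : ℤ) {u v : V}
    (p : G.Walk u v) (hp : ∀ w ∈ p.support, K ≤ G.layeringTreeDist s t w) :
    G.layeringTreeDist s u v ≤ G.layeringTreeDist s t u + G.layeringTreeDist s t v - 2 * K := by
  induction p with
  | nil =>
    have := hp _ (Walk.start_mem_support _)
    rw [layeringTreeDist_self hG]
    omega
  | @cons a b c hab q ih =>
    have ha : K ≤ G.layeringTreeDist s t a := hp a (by simp)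
    have hb : K ≤ G.layeringTreeDist s t b := hp b (by simp [q.start_mem_support])
    have hbc := ih fun w hw => hp w (by simp [hw])
    have hab := hab.layeringTreeDist_le_one (s := s) hG
    have h4 := meetLevel_four_point (s := s) hG t a b c
    simp only [layeringTreeDist] at *
    omega

end SimpleGraph

section ClusterDiam

variable {V : Type} [Fintype V] {G : SimpleGraph V}

lemma SameCluster.dist_le_clusterDiam {s u v : V} (h : SameCluster G s u v) :
    G.dist u v ≤ clusterDiam G s := by
  classical
  have := Finset.le_sup (f := fun p : V × V =>
    if SameCluster G s p.1 p.2 then G.dist p.1 p.2 else 0) (Finset.mem_univ (u, v))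
  rwa [if_pos h] at this

lemma clusterDiam_le {s : V} {n : ℕ} (h : ∀ u v, SameCluster G s u v → G.dist u v ≤ n) :
    clusterDiam G s ≤ n := by
  classical
  refine Finset.sup_le fun ⟨u, v⟩ _ => ?_
  split_ifs with huv
  exacts [h u v huv, Nat.zero_le _]

lemma dist_le_layeringTreeDist_add_clusterDiam (hG : G.Connected) (s x y : V) :
    G.dist x y ≤ G.layeringTreeDist s x y + clusterDiam G s := by
  set m := G.meetLevel s x y
  have hmx := meetLevel_le_left (s := s) hG x y
  have hmy := meetLevel_le_right (s := s) hG x y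
  obtain ⟨x', hx', hxx', hjx⟩ :=
    hG.exists_joinedAbove_of_dist_eq s m (G.dist s x - m) x (by omega)
  obtain ⟨y', hy', hyy', hjy⟩ :=
    hG.exists_joinedAbove_of_dist_eq s m (G.dist s y - m) y (by omega)
  have h_cluster : SameCluster G s x' y' :=
    ⟨hx'.trans hy'.symm, hx' ▸ hjx.trans ((joinedAbove_meetLevel hG x y).trans hjy.symm)⟩
  have h_diam := h_cluster.dist_le_clusterDiam
  have h1 : G.dist x y ≤ G.dist x x' + G.dist x' y := hG.dist_triangle
  have h2 : G.dist x' y ≤ G.dist x' y' + G.dist y' y := hG.dist_triangle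
  have h3 : G.dist x x' = G.dist x' x := dist_comm
  simp only [layeringTreeDist]
  omega

lemma SameCluster.dist_le_three_mul_clusterDiam (hG : G.Connected) (s : V) {t u v : V}
    (h : SameCluster G t u v) : G.dist u v ≤ 3 * clusterDiam G s := by
  obtain ⟨h_layer, p, hp⟩ := h
  have h_far : ∀ w ∈ p.support,
      (G.dist t u - clusterDiam G s : ℤ) ≤ G.layeringTreeDist s t w := fun w hw => by
    have h_tw := dist_le_layeringTreeDist_add_clusterDiam hG s t w
    have h_layer_w := hp w hw
    omega
  have h_uv := layeringTreeDist_le_of_walk hG t _ p h_far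
  have h_tu := layeringTreeDist_le_dist (s := s) hG t u
  have h_tv := layeringTreeDist_le_dist (s := s) hG t v
  have h_dist := dist_le_layeringTreeDist_add_clusterDiam hG s u v
  omega

lemma clusterDiam_le_three_mul_clusterDiam (hG : G.Connected) (s t : V) :
    clusterDiam G t ≤ 3 * clusterDiam G s :=
  clusterDiam_le fun _ _ h => h.dist_le_three_mul_clusterDiam hG s

end ClusterDiam

/-- For every finite connected graph `G`, `Δ̂(G) ≤ 3 ⬝ Δ(G)`. -/
theorem maxClusterDiam_le_three_mul_minClusterDiam {V : Type} [Fintype V]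
    (G : SimpleGraph V) (hG : G.Connected) :
    maxClusterDiam G ≤ 3 * minClusterDiam G := by
  have : Nonempty V := hG.nonempty
  obtain ⟨s, hs⟩ : minClusterDiam G ∈ Set.range (clusterDiam G) :=
    Nat.sInf_mem (Set.range_nonempty _)
  rw [maxClusterDiam, ← hs]
  exact Finset.sup_le fun t _ => clusterDiam_le_three_mul_clusterDiam hG s t
end

section
/- For every finite connected simple graph G, the slimness of G is at most ⌊(3/2)·tl(G)⌋, where tl(G) is the tree-length of G. -/
open SimpleGraph

/-- A walk is a geodesic (shortest path) if its length equals the distance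
between its endpoints. -/
def IsGeodesic {V : Type} (G : SimpleGraph V) {x y : V} (p : G.Walk x y) : Prop :=
  p.length = G.dist x y

/-- `G` is `δ`-slim: in every geodesic triangle, every vertex on one side is within
distance `δ` (in `G`) from the union of the other two sides. -/
def IsSlim {V : Type} (G : SimpleGraph V) (δ : ℕ) : Prop :=
  ∀ (x y z : V) (pxy : G.Walk x y) (pxz : G.Walk x z) (pyz : G.Walk y z),
    IsGeodesic G pxy → IsGeodesic G pxz → IsGeodesic G pyz →
    ∀ u ∈ pxy.support, ∃ v, (v ∈ pxz.support ∨ v ∈ pyz.support) ∧ G.dist u v ≤ δ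

/-- The slimness `sl(G)`: the smallest `δ` such that `G` is `δ`-slim. -/
noncomputable def slimness {V : Type} (G : SimpleGraph V) : ℕ :=
  sInf {δ : ℕ | IsSlim G δ}

/-- A tree-decomposition of `G` with index type `ι`: a tree `T` on `ι` and bags
covering all vertices and edges, such that for any node `j` on the path of `T`
between nodes `i` and `k`, the bag of `j` contains the intersection of the bags
of `i` and `k`. -/
structure TreeDecomp {V : Type} (G : SimpleGraph V) (ι : Type) where
  /-- the decomposition tree -/
  T : SimpleGraph ι
  isTree : T.IsTree
  /-- the bags -/
  bag : ι → Set V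
  covers_vertex : ∀ v : V, ∃ i, v ∈ bag i
  covers_edge : ∀ ⦃u v : V⦄, G.Adj u v → ∃ i, u ∈ bag i ∧ v ∈ bag i
  path_inter : ∀ (i j k : ι) (p : T.Walk i k), p.IsPath → j ∈ p.support →
      bag i ∩ bag k ⊆ bag j

/-- `G` admits a tree-decomposition of length at most `lam`
(every bag has diameter at most `lam` in `G`). -/
def HasTreeDecompOfLength {V : Type} (G : SimpleGraph V) (lam : ℕ) : Prop :=
  ∃ (ι : Type) (_ : Fintype ι) (td : TreeDecomp G ι),
    ∀ i, ∀ u ∈ td.bag i, ∀ v ∈ td.bag i, G.dist u v ≤ lam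

/-- The tree-length `tl(G)`: the minimum length over all tree-decompositions of `G`. -/
noncomputable def treeLength {V : Type} (G : SimpleGraph V) : ℕ :=
  sInf {lam : ℕ | HasTreeDecompOfLength G lam}

/-!
Fix a tree-decomposition of length `λ` and a vertex `u` on the side `[x, y]` of a geodesic
triangle, and let `A` be the union of the two other sides. If a bag contains `u` and a point of
`A` we are done. Otherwise the bags meeting the connected set `A` form a subtree avoiding the
bags of `u`, so some tree edge `st` separates them: then `bag s ∩ bag t` separates `u` from `x`
and from `y` in `G`, and meets the two halves of the geodesic `[x, y]` in points `p` and `q`.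
As `u` lies between `p` and `q` on a geodesic and `d(p, q) ≤ λ`, one of `d(u, p)`, `d(u, q)` is
at most `λ / 2`, while both `p` and `q` are within `λ` of a point of `A` in `bag t`.
-/

theorem SimpleGraph.Walk.exists_adj_reachable_deleteEdges {ι : Type*} {T : SimpleGraph ι}
    {S : Set ι} {a b : ι} (p : T.Walk a b) (ha : a ∉ S) (hb : b ∈ S) :
    ∃ s t, T.Adj s t ∧ s ∉ S ∧ t ∈ S ∧ (T.deleteEdges {s(s, t)}).Reachable a s := by
  induction p with
  | nil => exact absurd hb ha
  | @cons a a' _ h p ih =>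
    by_cases ha' : a' ∈ S
    · exact ⟨a, a', h, ha, ha', .refl a⟩
    obtain ⟨s, t, hst, hs, ht, ha's⟩ := ih ha' hb
    have hadj : (T.deleteEdges {s(s, t)}).Adj a a' := by
      refine deleteEdges_adj.mpr ⟨h, fun he => ?_⟩
      rcases Sym2.eq_iff.mp (Set.mem_singleton_iff.mp he) with ⟨-, rfl⟩ | ⟨rfl, -⟩
      · exact ha' ht
      · exact ha ht
    exact ⟨s, t, hst, hs, ht, hadj.reachable.trans ha's⟩

section Geodesic

variable {V : Type} [DecidableEq V] {G : SimpleGraph V} {x y u : V} {p : G.Walk x y}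

theorem IsGeodesic.dist_add_dist (hp : IsGeodesic G p) (hu : u ∈ p.support) :
    G.dist x u + G.dist u y = G.dist x y := by
  have hsplit : (p.takeUntil u hu).length + (p.dropUntil u hu).length = p.length := by
    rw [← Walk.length_append, Walk.take_spec]
  have htri := (p.takeUntil u hu).reachable.dist_triangle_left y
  have := dist_le (p.takeUntil u hu)
  have := dist_le (p.dropUntil u hu)
  unfold IsGeodesic at hp
  omega

theorem IsGeodesic.takeUntil (hp : IsGeodesic G p) (hu : u ∈ p.support) :
    IsGeodesic G (p.takeUntil u hu) := by
  have hsplit : (p.takeUntil u hu).length + (p.dropUntil u hu).length = p.length := by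
    rw [← Walk.length_append, Walk.take_spec]
  have := hp.dist_add_dist hu
  have := dist_le (p.takeUntil u hu)
  have := dist_le (p.dropUntil u hu)
  unfold IsGeodesic at hp ⊢
  omega

theorem IsGeodesic.dropUntil (hp : IsGeodesic G p) (hu : u ∈ p.support) :
    IsGeodesic G (p.dropUntil u hu) := by
  have hsplit : (p.takeUntil u hu).length + (p.dropUntil u hu).length = p.length := by
    rw [← Walk.length_append, Walk.take_spec]
  have := hp.dist_add_dist hu
  have := dist_le (p.takeUntil u hu)
  have := dist_le (p.dropUntil u hu)
  unfold IsGeodesic at hp ⊢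
  omega

theorem IsGeodesic.dist_add_dist_le {a b : V} (hp : IsGeodesic G p) (hu : u ∈ p.support)
    (ha : a ∈ (p.takeUntil u hu).support) (hb : b ∈ (p.dropUntil u hu).support) :
    G.dist a u + G.dist u b ≤ G.dist a b := by
  have hxu := (hp.takeUntil hu).dist_add_dist ha
  have huy := (hp.dropUntil hu).dist_add_dist hb
  have hxy := hp.dist_add_dist hu
  have hxa := ((p.takeUntil u hu).takeUntil a ha).reachable.dist_triangle_left y
  have hby := ((p.dropUntil u hu).dropUntil b hb).reachable.dist_triangle_right a
  omega

end Geodesic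

theorem hasTreeDecompOfLength_of_forall_dist_le {V : Type} {G : SimpleGraph V} {lam : ℕ}
    (h : ∀ u v, G.dist u v ≤ lam) : HasTreeDecompOfLength G lam :=
  ⟨Unit, inferInstance,
    { T := ⊥
      isTree := .of_subsingleton
      bag := fun _ => Set.univ
      covers_vertex := fun v => ⟨(), Set.mem_univ v⟩
      covers_edge := fun u v _ => ⟨(), Set.mem_univ u, Set.mem_univ v⟩
      path_inter := fun _ _ _ _ _ _ v _ => Set.mem_univ v },
    fun _ u _ v _ => h u v⟩

namespace TreeDecomp

variable {V ι : Type} {G : SimpleGraph V} (td : TreeDecomp G ι) {s t : ι}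

theorem mem_bag_inter_of_not_reachable {v : V} {i k : ι} (hi : v ∈ td.bag i)
    (hk : v ∈ td.bag k) (hik : ¬(td.T.deleteEdges {s(s, t)}).Reachable i k) :
    v ∈ td.bag s ∩ td.bag t := by
  obtain ⟨P, hP⟩ := (td.isTree.connected.preconnected i k).exists_isPath
  have hst : s(s, t) ∈ P.edges := by
    by_contra h
    exact hik (reachable_deleteEdges_iff_exists_walk.mpr ⟨P, h⟩)
  exact ⟨td.path_inter i s k P hP (P.fst_mem_support_of_mem_edges hst) ⟨hi, hk⟩,
    td.path_inter i t k P hP (P.snd_mem_support_of_mem_edges hst) ⟨hi, hk⟩⟩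

theorem exists_mem_support_inter_of_not_reachable {a b : V} (W : G.Walk a b) {i k : ι}
    (ha : a ∈ td.bag i) (hb : b ∈ td.bag k)
    (hik : ¬(td.T.deleteEdges {s(s, t)}).Reachable i k) :
    ∃ v ∈ W.support, v ∈ td.bag s ∩ td.bag t := by
  induction W generalizing i with
  | nil => exact ⟨_, Walk.start_mem_support _, td.mem_bag_inter_of_not_reachable ha hb hik⟩
  | @cons a a' _ h W ih =>
    obtain ⟨m, ham, ha'm⟩ := td.covers_edge h
    by_cases him : (td.T.deleteEdges {s(s, t)}).Reachable i m
    · obtain ⟨v, hv, hvst⟩ := ih ha'm hb fun hmk => hik (him.trans hmk)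
      exact ⟨v, List.mem_cons_of_mem _ hv, hvst⟩
    · exact ⟨a, List.mem_cons_self, td.mem_bag_inter_of_not_reachable ha ham him⟩

theorem exists_bag_inter_separating {A : Set V} {z : V} (hz : z ∈ A)
    (hA : ∀ w ∈ A, ∃ W : G.Walk w z, ∀ v ∈ W.support, v ∈ A) {u : V}
    (hu : ∀ i, u ∈ td.bag i → ∀ w ∈ A, w ∉ td.bag i) :
    ∃ s t, (∃ w ∈ A, w ∈ td.bag t) ∧
      ∀ x ∈ A, ∀ W : G.Walk u x, ∃ v ∈ W.support, v ∈ td.bag s ∩ td.bag t := by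
  obtain ⟨nu, hnu⟩ := td.covers_vertex u
  obtain ⟨nz, hnz⟩ := td.covers_vertex z
  obtain ⟨s, t, hst, hs, ⟨w, hwA, hwt⟩, hnus⟩ :=
    (td.isTree.connected.preconnected nu nz).some.exists_adj_reachable_deleteEdges
      (S := {i | ∃ w ∈ A, w ∈ td.bag i}) (fun ⟨w, hw, hwb⟩ => hu nu hnu w hw hwb) ⟨z, hz, hnz⟩
  -- `A` is connected and misses `bag s`, so all its bags lie in the component of `nz`.
  have hAnz : ∀ w ∈ A, ∀ k, w ∈ td.bag k → (td.T.deleteEdges {s(s, t)}).Reachable k nz := by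
    intro w hw k hk
    by_contra hknz
    obtain ⟨W, hW⟩ := hA w hw
    obtain ⟨v, hv, hvs, -⟩ := td.exists_mem_support_inter_of_not_reachable W hk hnz hknz
    exact hs ⟨v, hW v hv, hvs⟩
  have hbridge : ¬(td.T.deleteEdges {s(s, t)}).Reachable s t :=
    isAcyclic_iff_forall_adj_isBridge.mp td.isTree.isAcyclic hst
  have hnunz : ¬(td.T.deleteEdges {s(s, t)}).Reachable nu nz := fun h =>
    hbridge (hnus.symm.trans (h.trans (hAnz w hwA t hwt).symm))
  refine ⟨s, t, ⟨w, hwA, hwt⟩, fun x hx W => ?_⟩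
  obtain ⟨kx, hkx⟩ := td.covers_vertex x
  exact td.exists_mem_support_inter_of_not_reachable W hnu hkx
    fun h => hnunz (h.trans (hAnz x hx kx hkx))

theorem isSlim_three_mul_div_two (hG : G.Connected) {lam : ℕ}
    (hlen : ∀ i, ∀ u ∈ td.bag i, ∀ v ∈ td.bag i, G.dist u v ≤ lam) :
    IsSlim G (3 * lam / 2) := by
  classical
  intro x y z pxy pxz pyz hxy _ _ u hu
  set A : Set V := {v | v ∈ pxz.support ∨ v ∈ pyz.support}
  by_cases hnear : ∃ i, u ∈ td.bag i ∧ ∃ w ∈ A, w ∈ td.bag i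
  · obtain ⟨i, hui, w, hwA, hwi⟩ := hnear
    exact ⟨w, hwA, (hlen i u hui w hwi).trans (by omega)⟩
  push Not at hnear
  have hA : ∀ w ∈ A, ∃ W : G.Walk w z, ∀ v ∈ W.support, v ∈ A := by
    rintro w (hw | hw)
    · exact ⟨pxz.dropUntil w hw, fun v hv => Or.inl (pxz.support_dropUntil_subset_support hw hv)⟩
    · exact ⟨pyz.dropUntil w hw, fun v hv => Or.inr (pyz.support_dropUntil_subset_support hw hv)⟩
  obtain ⟨s, t, ⟨w, hwA, hwt⟩, hsep⟩ :=
    td.exists_bag_inter_separating (Or.inl pxz.end_mem_support) hA hnear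
  obtain ⟨p, hp, hps, hpt⟩ :=
    hsep x (Or.inl pxz.start_mem_support) (pxy.takeUntil u hu).reverse
  obtain ⟨q, hq, hqs, hqt⟩ := hsep y (Or.inr pyz.start_mem_support) (pxy.dropUntil u hu)
  rw [Walk.support_reverse, List.mem_reverse] at hp
  -- `u` lies between `p` and `q` on a geodesic, so it is within `λ / 2` of one of them.
  have hpuq := hxy.dist_add_dist_le hu hp hq
  have := hlen s p hps q hqs
  have := hlen t p hpt w hwt
  have := hlen t q hqt w hwt
  have := hG.dist_triangle (u := u) (v := p) (w := w)
  have := hG.dist_triangle (u := u) (v := q) (w := w)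
  have := dist_comm (G := G) (u := u) (v := p)
  exact ⟨w, hwA, by omega⟩

end TreeDecomp

/-- For every finite connected graph `G`, `sl(G) ≤ ⌊(3/2) ⬝ tl(G)⌋`. -/
theorem slimness_le_three_mul_treeLength_div_two {V : Type} [Fintype V]
    (G : SimpleGraph V) (hG : G.Connected) :
    slimness G ≤ 3 * treeLength G / 2 := by
  have := hG.nonempty
  obtain ⟨ι, -, td, hlen⟩ : HasTreeDecompOfLength G (treeLength G) :=
    Nat.sInf_mem (s := {lam | HasTreeDecompOfLength G lam}) ⟨G.diam,
      hasTreeDecompOfLength_of_forall_dist_le fun _ _ =>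
        G.dist_le_diam (G.connected_iff_ediam_ne_top.mp hG)⟩
  exact Nat.sInf_le (td.isSlim_three_mul_div_two hG hlen)
end

section
/- For every integer k ≥ 4 and every finite connected simple k-chordal graph G, the slimness of G is at most ⌊k/4⌋ + 1. -/
open SimpleGraph

/-- A cycle of `G` is induced (chordless) if any edge of `G` joining two vertices of
the cycle is an edge of the cycle. -/
def IsInducedCycle {V : Type} (G : SimpleGraph V) {v : V} (p : G.Walk v v) : Prop :=
  p.IsCycle ∧ ∀ a b : V, a ∈ p.support → b ∈ p.support → G.Adj a b → s(a, b) ∈ p.edges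

/-- `G` is `k`-chordal: every induced cycle of `G` has length at most `k`. -/
def KChordal {V : Type} (G : SimpleGraph V) (k : ℕ) : Prop :=
  ∀ (v : V) (p : G.Walk v v), IsInducedCycle G p → p.length ≤ k

/-!
If a vertex `u` of the side `P(x,y)` is farther than `δ = ⌊k/4⌋ + 1` from the union `W` of the
other two sides, follow `P(x,y)` from `u` in both directions until the first vertices `a`, `b` at
distance `1` from `W`. The piece `S` of `P(x,y)` between them is a geodesic of length `≥ 2δ` that
avoids `W` and whose inner vertices have no neighbour in `W`. The sides `P(x,z)`, `P(y,z)` make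
`W` induce a connected subgraph; a shortest path inside it between a neighbour of `b` and a
neighbour of `a`, shortest over all such pairs of neighbours, closes `S` into an induced cycle of
length `≥ 2|S| ≥ 4δ > k`.
-/
theorem Nat.exists_long_excursion {f : ℕ → ℕ} {n i₀ δ : ℕ}
    (hf : ∀ i j, i ≤ j → j ≤ n → f i ≤ f j + (j - i) ∧ f j ≤ f i + (j - i))
    (h0 : f 0 = 0) (hn : f n = 0) (hi₀ : i₀ ≤ n) (hδ : δ < f i₀) :
    ∃ a b, a + 2 * δ ≤ b ∧ b ≤ n ∧ f a = 1 ∧ f b = 1 ∧ ∀ i, a < i → i < b → 2 ≤ f i := by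
  classical
  have hex : ∃ t, f (i₀ + t) ≤ 1 := ⟨n - i₀, by rw [Nat.add_sub_cancel' hi₀, hn]; omega⟩
  set a := Nat.findGreatest (fun j => f j ≤ 1) i₀
  set b := i₀ + Nat.find hex
  have ha : f a ≤ 1 := Nat.findGreatest_spec (P := fun j => f j ≤ 1) (Nat.zero_le i₀) (by omega)
  have hai₀ : a ≤ i₀ := Nat.findGreatest_le i₀
  have hafter : ∀ j, a < j → j ≤ i₀ → 1 < f j := fun j h1 h2 =>
    not_le.mp (Nat.findGreatest_is_greatest (P := fun j => f j ≤ 1) h1 h2)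
  have hb : f b ≤ 1 := Nat.find_spec hex
  have hbn : b ≤ n := by
    have := Nat.find_min' hex (m := n - i₀) (by rw [Nat.add_sub_cancel' hi₀, hn]; omega)
    omega
  have hbefore : ∀ j, i₀ ≤ j → j < b → 1 < f j := fun j h1 h2 => by
    have := Nat.find_min hex (m := j - i₀) (by omega)
    rwa [Nat.add_sub_cancel' h1, not_le] at this
  have hia := hf a i₀ hai₀ hi₀
  have hib := hf i₀ b (by omega) hbn
  refine ⟨a, b, by omega, hbn, ?_, ?_, fun i h1 h2 => ?_⟩
  · rcases hai₀.lt_or_eq with hlt | heq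
    · have := hafter (a + 1) (by omega) hlt
      have := hf a (a + 1) (by omega) (by omega)
      omega
    · rw [heq] at ha ⊢; omega
  · rcases (Nat.le_add_right i₀ (Nat.find hex)).lt_or_eq with hlt | heq
    · have := hbefore (b - 1) (by omega) (by omega)
      have := hf (b - 1) b (by omega) hbn
      omega
    · rw [← show i₀ = b from heq] at hb ⊢; omega
  · rcases le_or_gt i i₀ with h | h
    · exact hafter i h1 h
    · exact hbefore i h.le h2

namespace SimpleGraph

variable {V : Type} {G : SimpleGraph V}

-- Junk value `0` when `W` is empty.
noncomputable def infDist (G : SimpleGraph V) (v : V) (W : Set V) : ℕ :=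
  sInf (G.dist v '' W)

lemma infDist_le_dist {v w : V} {W : Set V} (hw : w ∈ W) : G.infDist v W ≤ G.dist v w :=
  Nat.sInf_le ⟨w, hw, rfl⟩

lemma infDist_eq_zero_of_mem {v : V} {W : Set V} (hv : v ∈ W) : G.infDist v W = 0 := by
  simpa using infDist_le_dist (G := G) (v := v) hv

lemma exists_dist_eq_infDist {W : Set V} (hW : W.Nonempty) (v : V) :
    ∃ w ∈ W, G.dist v w = G.infDist v W :=
  Nat.sInf_mem (hW.image _)

lemma Connected.infDist_le_infDist_add_dist (hG : G.Connected) {W : Set V} (hW : W.Nonempty)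
    (v v' : V) : G.infDist v W ≤ G.infDist v' W + G.dist v v' := by
  obtain ⟨w, hw, hdist⟩ := exists_dist_eq_infDist (G := G) hW v'
  calc G.infDist v W ≤ G.dist v w := infDist_le_dist hw
    _ ≤ G.dist v v' + G.dist v' w := hG.dist_triangle
    _ = G.infDist v' W + G.dist v v' := by rw [hdist, add_comm]

namespace Walk

variable {u v w : V}

lemma eq_end_of_mem_support_of_length_le_dist {p : G.Walk u v} (hw : w ∈ p.support)
    (h : p.length ≤ G.dist u w) : w = v := by
  classical
  by_contra hne
  exact (h.trans (dist_le _)).not_gt (length_takeUntil_lt_length hw hne)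

lemma eq_start_of_mem_support_of_length_le_dist {p : G.Walk u v} (hw : w ∈ p.support)
    (h : p.length ≤ G.dist w v) : w = u := by
  classical
  by_contra hne
  exact (h.trans (dist_le _)).not_gt (length_dropUntil_lt_length hw hne)

lemma exists_isSubwalk_getVert_getVert (p : G.Walk u v) {i j : ℕ} (hij : i ≤ j)
    (hj : j ≤ p.length) :
    ∃ q : G.Walk (p.getVert i) (p.getVert j), q.IsSubwalk p ∧ q.length = j - i ∧
      ∀ c ∈ q.support, ∃ l, i ≤ l ∧ l ≤ j ∧ p.getVert l = c := by
  have hend : (p.drop i).getVert (j - i) = p.getVert j := by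
    rw [drop_getVert, Nat.add_sub_cancel' hij]
  refine ⟨((p.drop i).take (j - i)).copy rfl hend,
    ((isSubwalk_take _ _).trans (isSubwalk_drop _ _)).copy _ _ rfl rfl, ?_, fun c hc => ?_⟩
  · simp only [length_copy, take_length, drop_length]
    omega
  · rw [support_copy] at hc
    obtain ⟨n, rfl, -⟩ := mem_support_iff_exists_getVert.mp hc
    exact ⟨i + min (j - i) n, by omega, by omega, by simp⟩

end Walk

end SimpleGraph

namespace IsGeodesic

variable {V : Type} {G : SimpleGraph V} {u v : V} {p : G.Walk u v}

lemma isPath (hp : IsGeodesic G p) : p.IsPath := p.isPath_of_length_eq_dist hp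

lemma of_isSubwalk {u' v' : V} {q : G.Walk u' v'} (hp : IsGeodesic G p) (hq : q.IsSubwalk p) :
    IsGeodesic G q :=
  length_eq_dist_of_subwalk hp hq

lemma dist_getVert_getVert (hp : IsGeodesic G p) {i j : ℕ} (hij : i ≤ j) (hj : j ≤ p.length) :
    G.dist (p.getVert i) (p.getVert j) = j - i := by
  obtain ⟨q, hq, hlen, -⟩ := p.exists_isSubwalk_getVert_getVert hij hj
  rw [← hp.of_isSubwalk hq, hlen]

lemma isChordless (hp : IsGeodesic G p) : p.IsChordless := by
  have hconsec : ∀ i j, i ≤ j → j ≤ p.length → G.Adj (p.getVert i) (p.getVert j) →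
      s(p.getVert i, p.getVert j) ∈ p.edges := by
    intro i j hij hj hadj
    have hdist := hp.dist_getVert_getVert hij hj
    rw [dist_eq_one_iff_adj.mpr hadj] at hdist
    obtain rfl : j = i + 1 := by omega
    rw [← Walk.getElem_edges (by simp; omega)]
    exact List.getElem_mem _
  refine Walk.isChordless_iff_forall_mem_edges.mpr fun a b ha hb hab => ?_
  obtain ⟨i, rfl, hi⟩ := Walk.mem_support_iff_exists_getVert.mp ha
  obtain ⟨j, rfl, hj⟩ := Walk.mem_support_iff_exists_getVert.mp hb
  rcases le_total i j with h | h
  · exact hconsec i j h hj hab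
  · rw [Sym2.eq_swap]
    exact hconsec j i h hi hab.symm

end IsGeodesic

lemma SimpleGraph.Walk.IsChordless.map {V V' : Type} {G : SimpleGraph V} {G' : SimpleGraph V'}
    (f : G ↪g G') {u v : V} {p : G.Walk u v} (hp : p.IsChordless) :
    (p.map f.toHom).IsChordless := by
  refine isChordless_iff_forall_mem_edges.mpr fun a b ha hb hab => ?_
  simp only [Walk.support_map, List.mem_map] at ha hb
  obtain ⟨a, ha, rfl⟩ := ha
  obtain ⟨b, hb, rfl⟩ := hb
  rw [Walk.edges_map]
  exact List.mem_map_of_mem (hp.mem_edges ha hb (f.map_adj_iff.mp hab))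

section

variable {V : Type} {G : SimpleGraph V}

open Walk in
theorem isInducedCycle_append_cons_concat {a b a' b' : V} {p : G.Walk a b} {r : G.Walk b' a'}
    (hp : p.IsPath) (hr : r.IsPath) (hpc : p.IsChordless) (hrc : r.IsChordless)
    (hab : a ≠ b) (hbb' : G.Adj b b') (ha'a : G.Adj a' a) (hdisj : p.support.Disjoint r.support)
    (hcross : ∀ c ∈ p.support, ∀ d ∈ r.support, G.Adj c d → c = a ∧ d = a' ∨ c = b ∧ d = b') :
    IsInducedCycle G (p.append (cons hbb' (r.concat ha'a))) := by
  have haR : a ∉ r.support := fun h => hdisj p.start_mem_support h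
  have hbR : b ∉ r.support := fun h => hdisj p.end_mem_support h
  refine ⟨hp.isCycle_append ((hr.concat haR ha'a).cons ?_) ?_ (Or.inr (by simp)), ?_⟩
  · simp [support_concat, hbR, hab.symm]
  · have hnodup := hp.support_nodup
    rw [← cons_tail_support, List.nodup_cons] at hnodup
    simp only [support_cons, List.tail_cons, support_concat]
    intro c hc hc'
    rcases List.mem_append.mp hc' with h | h
    · exact hdisj (List.mem_of_mem_tail hc) h
    · exact hnodup.1 (List.mem_singleton.mp h ▸ hc)
  · have hmem : ∀ c ∈ (p.append (cons hbb' (r.concat ha'a))).support,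
        c ∈ p.support ∨ c ∈ r.support := by
      simp only [support_append, support_cons, List.tail_cons, support_concat, List.mem_append,
        List.mem_singleton]
      rintro c (h | h | rfl)
      exacts [.inl h, .inr h, .inl p.start_mem_support]
    have hedges : (p.append (cons hbb' (r.concat ha'a))).edges =
        p.edges ++ s(b, b') :: (r.edges ++ [s(a', a)]) := by
      simp [edges_append, edges_concat]
    intro c d hc hd hcd
    rw [hedges]
    rcases hmem c hc with hc | hc <;> rcases hmem d hd with hd | hd
    · simp [hpc.mem_edges hc hd hcd]
    · rcases hcross c hc d hd hcd with ⟨rfl, rfl⟩ | ⟨rfl, rfl⟩ <;> simp [Sym2.eq_swap]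
    · rcases hcross d hd c hc hcd.symm with ⟨rfl, rfl⟩ | ⟨rfl, rfl⟩ <;> simp [Sym2.eq_swap]
    · simp [hrc.mem_edges hc hd hcd]

end

namespace SimpleGraph

variable {V : Type} {G : SimpleGraph V}

theorem exists_isChordless_path_between_neighbors {W : Set V} (hW : (G.induce W).Connected)
    {a b : V} (ha : ∃ w ∈ W, G.Adj a w) (hb : ∃ w ∈ W, G.Adj b w) :
    ∃ (a' b' : V) (r : G.Walk b' a'), G.Adj a a' ∧ G.Adj b b' ∧ r.IsPath ∧ r.IsChordless ∧
      (∀ d ∈ r.support, d ∈ W) ∧ (∀ d ∈ r.support, G.Adj a d → d = a') ∧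
      ∀ d ∈ r.support, G.Adj b d → d = b' := by
  obtain ⟨wa, hwa, ha⟩ := ha
  obtain ⟨wb, hwb, hb⟩ := hb
  -- Minimising over all pairs of neighbours keeps `a` and `b` away from the interior of `r`.
  obtain ⟨b', a', hb', ha', hle⟩ : ∃ b' a' : W, G.Adj b b' ∧ G.Adj a a' ∧
      ∀ b'' a'' : W, G.Adj b b'' → G.Adj a a'' →
        (G.induce W).dist b' a' ≤ (G.induce W).dist b'' a'' := by
    obtain ⟨⟨b', a'⟩, ⟨hb', ha'⟩, hmin⟩ := exists_minimalFor_of_wellFoundedLT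
      (fun q : W × W => G.Adj b q.1 ∧ G.Adj a q.2) (fun q => (G.induce W).dist q.1 q.2)
      ⟨(⟨wb, hwb⟩, ⟨wa, hwa⟩), hb, ha⟩
    exact ⟨b', a', hb', ha', fun b'' a'' h1 h2 =>
      le_of_not_gt fun hlt => (hmin (j := (b'', a'')) ⟨h1, h2⟩ hlt.le).not_gt hlt⟩
  obtain ⟨R, hR⟩ := hW.exists_walk_length_eq_dist b' a'
  have hRgeod : IsGeodesic (G.induce W) R := hR
  have hsupp : ∀ d ∈ (R.map (Embedding.induce W).toHom).support, ∃ d' ∈ R.support, ↑d' = d := by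
    intro d hd
    rw [Walk.support_map] at hd
    exact List.mem_map.mp hd
  refine ⟨a', b', R.map (Embedding.induce W).toHom, ha', hb',
    hRgeod.isPath.map Subtype.val_injective, hRgeod.isChordless.map _, ?_, ?_, ?_⟩ <;>
    intro _ hd <;> obtain ⟨d, hdR, rfl⟩ := hsupp _ hd
  · exact d.2
  · exact fun had => congrArg Subtype.val
      (R.eq_end_of_mem_support_of_length_le_dist hdR (hR ▸ hle _ _ hb' had))
  · exact fun hbd => congrArg Subtype.val
      (R.eq_start_of_mem_support_of_length_le_dist hdR (hR ▸ hle _ _ hbd ha'))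

theorem exists_isGeodesic_avoiding_of_far (hG : G.Connected) {W : Set V} {x y u : V}
    {p : G.Walk x y} (hp : IsGeodesic G p) (hx : x ∈ W) (hy : y ∈ W) (hu : u ∈ p.support)
    {δ : ℕ} (hfar : ∀ w ∈ W, δ < G.dist u w) :
    ∃ (a b : V) (S : G.Walk a b), IsGeodesic G S ∧ 2 * δ ≤ S.length ∧
      (∃ w ∈ W, G.Adj a w) ∧ (∃ w ∈ W, G.Adj b w) ∧ (∀ c ∈ S.support, c ∉ W) ∧
      ∀ c ∈ S.support, ∀ w ∈ W, G.Adj c w → c = a ∨ c = b := by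
  have hW : W.Nonempty := ⟨x, hx⟩
  set f : ℕ → ℕ := fun i => G.infDist (p.getVert i) W
  obtain ⟨i₀, rfl, hi₀⟩ := Walk.mem_support_iff_exists_getVert.mp hu
  have hlip : ∀ i j, i ≤ j → j ≤ p.length → f i ≤ f j + (j - i) ∧ f j ≤ f i + (j - i) := by
    intro i j hij hj
    rw [← hp.dist_getVert_getVert hij hj]
    exact ⟨hG.infDist_le_infDist_add_dist hW _ _,
      dist_comm (G := G) ▸ hG.infDist_le_infDist_add_dist hW _ _⟩
  have hδ : δ < f i₀ := by
    obtain ⟨w, hw, hdist⟩ := exists_dist_eq_infDist (G := G) hW (p.getVert i₀)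
    simpa only [f, ← hdist] using hfar w hw
  obtain ⟨ja, jb, hlong, hjb, hfa, hfb, hmid⟩ := Nat.exists_long_excursion hlip
    (by simp [f, infDist_eq_zero_of_mem hx]) (by simp [f, infDist_eq_zero_of_mem hy]) hi₀ hδ
  have hrange : ∀ l, ja ≤ l → l ≤ jb → 1 ≤ f l ∧ (f l ≤ 1 → l = ja ∨ l = jb) := by
    intro l h1 h2
    rcases h1.lt_or_eq with h1 | rfl
    · rcases h2.lt_or_eq with h2 | rfl
      · have := hmid l h1 h2
        omega
      · omega
    · omega
  have hnbr : ∀ j, f j = 1 → ∃ w ∈ W, G.Adj (p.getVert j) w := fun j hj => by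
    obtain ⟨w, hw, hdist⟩ := exists_dist_eq_infDist (G := G) hW (p.getVert j)
    exact ⟨w, hw, dist_eq_one_iff_adj.mp (hdist.trans hj)⟩
  obtain ⟨S, hSsub, hSlen, hSsupp⟩ := p.exists_isSubwalk_getVert_getVert (by omega : ja ≤ jb) hjb
  refine ⟨_, _, S, hp.of_isSubwalk hSsub, by omega, hnbr ja hfa, hnbr jb hfb, ?_, ?_⟩
  · rintro _ hc hcW
    obtain ⟨l, h1, h2, rfl⟩ := hSsupp _ hc
    exact Nat.one_le_iff_ne_zero.mp (hrange l h1 h2).1 (infDist_eq_zero_of_mem hcW)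
  · rintro _ hc w hw hcw
    obtain ⟨l, h1, h2, rfl⟩ := hSsupp _ hc
    have := (dist_eq_one_iff_adj.mpr hcw).symm ▸ infDist_le_dist (G := G) (v := p.getVert l) hw
    obtain rfl | rfl := (hrange l h1 h2).2 this
    exacts [.inl rfl, .inr rfl]

theorem exists_isInducedCycle_of_isGeodesic_avoiding (hG : G.Connected) {W : Set V}
    (hW : (G.induce W).Connected) {a b : V} {S : G.Walk a b} (hS : IsGeodesic G S)
    (hab : a ≠ b) (ha : ∃ w ∈ W, G.Adj a w) (hb : ∃ w ∈ W, G.Adj b w)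
    (hSW : ∀ c ∈ S.support, c ∉ W) (hends : ∀ c ∈ S.support, ∀ w ∈ W, G.Adj c w → c = a ∨ c = b) :
    ∃ (v : V) (c : G.Walk v v), IsInducedCycle G c ∧ 2 * S.length ≤ c.length := by
  obtain ⟨a', b', r, ha', hb', hr, hrc, hrW, hra, hrb⟩ :=
    exists_isChordless_path_between_neighbors hW ha hb
  have hcycle := isInducedCycle_append_cons_concat hS.isPath hr hS.isChordless hrc hab hb'
    ha'.symm (fun c hc hc' => hSW c hc (hrW c hc')) fun c hc d hd hcd => by
      obtain rfl | rfl := hends c hc d (hrW d hd) hcd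
      exacts [.inl ⟨rfl, hra d hd hcd⟩, .inr ⟨rfl, hrb d hd hcd⟩]
  have hshort : S.length ≤ r.length + 2 := calc
    S.length = G.dist a b := hS
    _ ≤ G.dist a a' + G.dist a' b := hG.dist_triangle
    _ ≤ G.dist a a' + (G.dist a' b' + G.dist b' b) := by
      gcongr
      exact hG.dist_triangle
    _ ≤ 1 + (r.length + 1) := by
      rw [dist_eq_one_iff_adj.mpr ha', dist_comm (u := b'), dist_eq_one_iff_adj.mpr hb',
        dist_comm]
      gcongr
      exact dist_le r
    _ = r.length + 2 := by ring
  refine ⟨_, _, hcycle, ?_⟩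
  simp only [Walk.length_append, Walk.length_cons, Walk.length_concat]
  omega

end SimpleGraph

theorem slimness_le_of_kChordal_general {V : Type} (G : SimpleGraph V)
    (hG : G.Connected) (k : ℕ) (hchord : KChordal G k) :
    slimness G ≤ k / 4 + 1 := by
  refine Nat.sInf_le fun x y z pxy pxz pyz hxy hxz hyz u hu => ?_
  by_contra! hfar
  set W : Set V := {v | v ∈ pxz.support} ∪ {v | v ∈ pyz.support}
  have hW : (G.induce W).Connected :=
    induce_union_connected pxz.connected_induce_support.preconnected
      pyz.connected_induce_support.preconnected ⟨z, pxz.end_mem_support, pyz.end_mem_support⟩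
  obtain ⟨a, b, S, hS, hlen, ha, hb, hSW, hends⟩ := exists_isGeodesic_avoiding_of_far (W := W)
    hG hxy (.inl pxz.start_mem_support) (.inr pyz.start_mem_support) hu hfar
  obtain ⟨v, c, hc, hclen⟩ := exists_isInducedCycle_of_isGeodesic_avoiding hG hW hS
    (fun hab => by subst hab; rw [IsGeodesic, dist_self] at hS; omega) ha hb hSW hends
  have := hchord v c hc
  omega

/-- For every integer `k ≥ 4`, every finite connected `k`-chordal graph `G`
satisfies `sl(G) ≤ ⌊k/4⌋ + 1`. -/
theorem slimness_le_of_kChordal {V : Type} [Fintype V] (G : SimpleGraph V)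
    (hG : G.Connected) (k : ℕ) (hk : 4 ≤ k) (hchord : KChordal G k) :
    slimness G ≤ k / 4 + 1 :=
  slimness_le_of_kChordal_general G hG k hchord
end

section
/- Every finite connected chordal graph has slimness at most 1. -/
/-!
If a vertex `u` of the side `P(x,y)` is neither on nor adjacent to the other two sides, extend it
within `P(x,y)` to the maximal stretch of such vertices, together with its two ends `a`, `b`. This
stretch is part of a geodesic, hence a chordless path of length `d(a,b) ≥ 2`. The other two sides,
meeting at `z`, join `b` back to `a`; a shortest such walk is a chordless path of length at least
`d(a,b) ≥ 2`, and nothing joins it to the inner vertices of the stretch, so the two close up into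
an induced cycle of length at least `4`.
-/

open SimpleGraph

namespace SimpleGraph.Walk

variable {V : Type*} {G : SimpleGraph V}

theorem exists_shorter_cons_of_adj [DecidableEq V] {s t w a : V} (h : G.Adj s t)
    (p : G.Walk t w) (ha : a ∈ p.support) (hsa : G.Adj s a) (hne : s(s, a) ∉ (cons h p).edges) :
    ∃ q : G.Walk s w, q.length < (cons h p).length ∧ q.support ⊆ (cons h p).support := by
  have hat : a ≠ t := by
    rintro rfl
    exact hne (by simp)
  refine ⟨cons hsa (p.dropUntil a ha), ?_, ?_⟩
  · simpa using length_dropUntil_lt_length ha hat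
  · simpa using List.cons_subset_cons _ (p.support_dropUntil_subset_support ha)

theorem exists_shorter_of_not_isChordless [DecidableEq V] {u v : V} {p : G.Walk u v}
    (hp : ¬ p.IsChordless) :
    ∃ q : G.Walk u v, q.length < p.length ∧ q.support ⊆ p.support := by
  induction p with
  | nil => simp [isChordless_iff_forall_mem_edges] at hp
  | @cons s t w h p ih =>
    by_cases hpc : p.IsChordless
    · simp only [isChordless_iff_forall_mem_edges, not_forall] at hp
      obtain ⟨a, b, ha, hb, hab, hne⟩ := hp
      rw [support_cons, List.mem_cons] at ha hb
      rcases ha with rfl | ha <;> rcases hb with rfl | hb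
      · exact absurd rfl hab.ne
      · exact exists_shorter_cons_of_adj h p hb hab hne
      · exact exists_shorter_cons_of_adj h p ha hab.symm (by rwa [Sym2.eq_swap])
      · exact absurd (by simpa using Or.inr (hpc.mem_edges ha hb hab)) hne
    · obtain ⟨q, hlt, hsub⟩ := ih hpc
      exact ⟨cons h q, by simpa using hlt, by simpa using List.cons_subset_cons _ hsub⟩

theorem exists_isPath_isChordless_of_support_subset {u v : V} {T : Set V} (p : G.Walk u v)
    (hp : ∀ w ∈ p.support, w ∈ T) :
    ∃ q : G.Walk u v, q.IsPath ∧ q.IsChordless ∧ ∀ w ∈ q.support, w ∈ T := by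
  classical
  induction hn : p.length using Nat.strong_induction_on generalizing p with
  | _ n ih =>
  have hbypass : ∀ w ∈ p.bypass.support, w ∈ T := fun w hw ↦
    hp w (p.support_bypass_subset_support hw)
  by_cases hc : p.bypass.IsChordless
  · exact ⟨p.bypass, p.bypass_isPath, hc, hbypass⟩
  · obtain ⟨q, hlt, hsub⟩ := exists_shorter_of_not_isChordless hc
    have := p.length_bypass_le_length
    exact ih q.length (by omega) q (fun w hw ↦ hbypass w (hsub hw)) rfl

theorem exists_eq_append_at_first (P : V → Prop) {s t : V} (p : G.Walk s t) (hs : ¬ P s)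
    (ht : P t) :
    ∃ (c : V) (q : G.Walk s c) (r : G.Walk c t),
      p = q.append r ∧ P c ∧ ∀ w ∈ q.support, w = c ∨ ¬ P w := by
  induction p with
  | nil => exact absurd ht hs
  | @cons s t w h p ih =>
    by_cases hPt : P t
    · refine ⟨t, cons h nil, p, rfl, hPt, ?_⟩
      simp only [support_cons, support_nil, List.mem_cons]
      rintro w (rfl | rfl | h)
      exacts [.inr hs, .inl rfl, absurd h List.not_mem_nil]
    · obtain ⟨c, q, r, rfl, hc, hq⟩ := ih hPt ht
      refine ⟨c, cons h q, r, rfl, hc, ?_⟩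
      rintro w hw
      rw [support_cons, List.mem_cons] at hw
      rcases hw with rfl | hw
      exacts [.inr hs, hq w hw]

theorem exists_isSubwalk_of_not_of_ends (P : V → Prop) {x y u : V} (p : G.Walk x y) (hx : P x)
    (hy : P y) (hu : u ∈ p.support) (hPu : ¬ P u) :
    ∃ (a b : V) (σ : G.Walk a b), σ.IsSubwalk p ∧ P a ∧ P b ∧ 1 < σ.length ∧
      ∀ w ∈ σ.support, w = a ∨ w = b ∨ ¬ P w := by
  classical
  obtain ⟨a, qa, ra, hta, ha, hqa⟩ :=
    exists_eq_append_at_first P (p.takeUntil u hu).reverse hPu hx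
  obtain ⟨b, qb, rb, hdb, hb, hqb⟩ := exists_eq_append_at_first P (p.dropUntil u hu) hPu hy
  refine ⟨a, b, qa.reverse.append qb, ⟨ra.reverse, rb, ?_⟩, ha, hb, ?_, ?_⟩
  · have htake : p.takeUntil u hu = ra.reverse.append qa.reverse := by
      rw [← reverse_reverse (p.takeUntil u hu), hta, reverse_append]
    rw [← p.take_spec hu, htake, hdb]
    simp only [append_assoc]
  · have hqa : qa.length ≠ 0 := fun h ↦ hPu (eq_of_length_eq_zero h ▸ ha)
    have hqb : qb.length ≠ 0 := fun h ↦ hPu (eq_of_length_eq_zero h ▸ hb)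
    simp only [length_append, length_reverse]
    omega
  · intro w hw
    rw [mem_support_append_iff, support_reverse, List.mem_reverse] at hw
    rcases hw with hw | hw
    · exact (hqa w hw).elim .inl (.inr ∘ .inr)
    · exact (hqb w hw).elim (.inr ∘ .inl) (.inr ∘ .inr)

theorem exists_walk_support_subset_of_eq_or_adj [DecidableEq V] {x z v c : V} (p : G.Walk x z)
    (hv : v ∈ p.support) (hcv : c = v ∨ G.Adj c v) :
    ∃ r : G.Walk c z, ∀ w ∈ r.support, w = c ∨ w ∈ p.support := by
  have hdrop : ∀ w ∈ (p.dropUntil v hv).support, w ∈ p.support := fun w hw ↦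
    p.support_dropUntil_subset_support hv hw
  rcases hcv with rfl | hcv
  · exact ⟨p.dropUntil c hv, fun w hw ↦ .inr (hdrop w hw)⟩
  · refine ⟨cons hcv (p.dropUntil v hv), fun w hw ↦ ?_⟩
    rw [support_cons, List.mem_cons] at hw
    exact hw.imp_right (hdrop w)

end SimpleGraph.Walk

open Walk

theorem isInducedCycle_append {V : Type} {G : SimpleGraph V} {a b : V} {σ : G.Walk a b}
    {τ : G.Walk b a} (hσ : σ.IsPath) (hτ : τ.IsPath) (hσc : σ.IsChordless)
    (hτc : τ.IsChordless) (hσlen : 1 < σ.length)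
    (hsep : ∀ p ∈ σ.support, ∀ q ∈ τ.support, p = q ∨ G.Adj p q →
      p = a ∨ p = b ∨ q = a ∨ q = b) :
    IsInducedCycle G (σ.append τ) := by
  have hcross : ∀ p ∈ σ.support, ∀ q ∈ τ.support, G.Adj p q →
      s(p, q) ∈ σ.edges ∨ s(p, q) ∈ τ.edges := by
    intro p hp q hq hpq
    rcases hsep p hp q hq (.inr hpq) with rfl | rfl | rfl | rfl
    · exact .inr (hτc.mem_edges τ.end_mem_support hq hpq)
    · exact .inr (hτc.mem_edges τ.start_mem_support hq hpq)
    · exact .inl (hσc.mem_edges hp σ.start_mem_support hpq)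
    · exact .inl (hσc.mem_edges hp σ.end_mem_support hpq)
  refine ⟨hσ.isCycle_append hτ ?_ (.inl hσlen), ?_⟩
  · intro v hvσ hvτ
    have hσnd := hσ.support_nodup
    have hτnd := hτ.support_nodup
    rw [← σ.cons_tail_support, List.nodup_cons] at hσnd
    rw [← τ.cons_tail_support, List.nodup_cons] at hτnd
    have hva : v ≠ a := by rintro rfl; exact hσnd.1 hvσ
    have hvb : v ≠ b := by rintro rfl; exact hτnd.1 hvτ
    rcases hsep v (List.mem_of_mem_tail hvσ) v (List.mem_of_mem_tail hvτ) (.inl rfl) with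
      h | h | h | h <;> contradiction
  · intro p q hp hq hpq
    rw [mem_support_append_iff] at hp hq
    rw [edges_append, List.mem_append]
    rcases hp with hp | hp <;> rcases hq with hq | hq
    · exact .inl (hσc.mem_edges hp hq hpq)
    · exact hcross p hp q hq hpq
    · rw [Sym2.eq_swap]
      exact hcross q hq p hp hpq.symm
    · exact .inr (hτc.mem_edges hp hq hpq)

theorem IsGeodesic.isChordless_s8 {V : Type} {G : SimpleGraph V} {u v : V} {p : G.Walk u v}
    (hp : IsGeodesic G p) : p.IsChordless := by
  classical
  by_contra hc
  obtain ⟨q, hlt, -⟩ := exists_shorter_of_not_isChordless hc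
  have := G.dist_le q
  rw [IsGeodesic] at hp
  omega

theorem exists_isInducedCycle_of_isGeodesic {V : Type} {G : SimpleGraph V} {a b : V}
    {S : Set V} {σ : G.Walk a b} (hσ : IsGeodesic G σ) (hσlen : 1 < σ.length)
    (hσS : ∀ p ∈ σ.support, p = a ∨ p = b ∨ ¬ ∃ q ∈ S, p = q ∨ G.Adj p q)
    (τ : G.Walk b a) (hτS : ∀ w ∈ τ.support, w ∈ {a, b} ∪ S) :
    ∃ (v : V) (c : G.Walk v v), IsInducedCycle G c ∧ 3 < c.length := by
  obtain ⟨τ', hτ', hτ'c, hτ'S⟩ := exists_isPath_isChordless_of_support_subset τ hτS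
  have hτ'len : 1 < τ'.length := by
    have := G.dist_le τ'
    rw [dist_comm, ← hσ] at this
    omega
  refine ⟨a, σ.append τ', isInducedCycle_append (σ.isPath_of_length_eq_dist hσ) hτ'
    hσ.isChordless_s8 hτ'c hσlen ?_, by rw [length_append]; omega⟩
  intro p hp q hq hpq
  rcases hσS p hp with hpa | hpb | hpS
  · exact .inl hpa
  · exact .inr (.inl hpb)
  rcases hτ'S q hq with (rfl | rfl) | hqS
  · exact .inr (.inr (.inl rfl))
  · exact .inr (.inr (.inr rfl))
  · exact absurd ⟨q, hqS, hpq⟩ hpS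

theorem isSlim_one_of_kChordal {V : Type} {G : SimpleGraph V} (hchord : KChordal G 3) :
    IsSlim G 1 := by
  intro x y z pxy pxz pyz hxy _ _ u hu
  set S : Set V := {v | v ∈ pxz.support ∨ v ∈ pyz.support}
  set P : V → Prop := fun w ↦ ∃ v ∈ S, w = v ∨ G.Adj w v
  by_contra hfar
  have hPu : ¬ P u := by
    rintro ⟨v, hv, rfl | huv⟩
    · exact hfar ⟨u, hv, by simp⟩
    · exact hfar ⟨v, hv, (dist_eq_one_iff_adj.2 huv).le⟩
  obtain ⟨a, b, σ, hsub, ha, hb, hσlen, hσP⟩ := exists_isSubwalk_of_not_of_ends P pxy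
    ⟨x, .inl pxz.start_mem_support, .inl rfl⟩ ⟨y, .inr pyz.start_mem_support, .inl rfl⟩ hu hPu
  have hP : ∀ c, P c → ∃ r : G.Walk c z, ∀ w ∈ r.support, w = c ∨ w ∈ S := by
    classical
    rintro c ⟨v, hv | hv, hcv⟩
    · obtain ⟨r, hr⟩ := exists_walk_support_subset_of_eq_or_adj pxz hv hcv
      exact ⟨r, fun w hw ↦ (hr w hw).imp_right .inl⟩
    · obtain ⟨r, hr⟩ := exists_walk_support_subset_of_eq_or_adj pyz hv hcv
      exact ⟨r, fun w hw ↦ (hr w hw).imp_right .inr⟩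
  obtain ⟨ra, hra⟩ := hP a ha
  obtain ⟨rb, hrb⟩ := hP b hb
  obtain ⟨v, c, hc, hclen⟩ := exists_isInducedCycle_of_isGeodesic
    (length_eq_dist_of_subwalk hxy hsub) hσlen hσP (rb.append ra.reverse) fun w hw ↦ by
      rw [mem_support_append_iff, support_reverse, List.mem_reverse] at hw
      rcases hw with hw | hw
      · rcases hrb w hw with rfl | hw <;> simp [hw]
      · rcases hra w hw with rfl | hw <;> simp [hw]
  exact absurd (hchord v c hc) (by omega)

theorem slimness_le_one_of_chordal_general {V : Type} (G : SimpleGraph V)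
    (hchord : KChordal G 3) :
    slimness G ≤ 1 :=
  Nat.sInf_le (isSlim_one_of_kChordal hchord)

/-- Every finite connected chordal graph has slimness at most 1. -/
theorem slimness_le_one_of_chordal {V : Type} [Fintype V] (G : SimpleGraph V)
    (hG : G.Connected) (hchord : KChordal G 3) :
    slimness G ≤ 1 :=
  slimness_le_one_of_chordal_general G hchord
end

section
/- A finite connected simple graph G has slimness 0 if and only if G is a block graph, i.e., every block (maximal biconnected subgraph) of G is a clique. -/
open SimpleGraph

/-- The induced subgraph of `G` on `B` is connected and has no cut vertex
(i.e., it is biconnected: removing any vertex of `B` keeps it connected). -/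
def ConnNoCutVertex {V : Type} (G : SimpleGraph V) (B : Set V) : Prop :=
  (G.induce B).Connected ∧ ∀ v ∈ B, (G.induce (B \ {v})).Connected

/-- `B` is a block of `G`: a maximal connected induced subgraph without a cut vertex. -/
def IsBlockSet {V : Type} (G : SimpleGraph V) (B : Set V) : Prop :=
  ConnNoCutVertex G B ∧ ∀ B' : Set V, B ⊆ B' → ConnNoCutVertex G B' → B = B'

/-!
A geodesic triangle is `0`-slim exactly when each side is covered by the other two.

If `G` is `0`-slim and `a - c - d` is an induced path, every geodesic from `a` to `d` passes
through `c`; applying `0`-slimness to the first edge of a walk and a geodesic from its second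
vertex, one edge at a time, shows that every walk from `a` to `d` passes through `c` too. So `c`
is a cut vertex of every connected set containing `a, c, d`, and adjacency is transitive on a
biconnected set, which is therefore a clique.

Conversely, suppose every biconnected set is a clique, and let `p` be a geodesic and `q` a path
with the same ends. Splitting both at a common inner vertex shows, by induction, that `q` visits
every vertex of `p`: if there is no common inner vertex and `p` has an inner vertex, `p` followed
by `q` reversed is a cycle, whose vertex set is biconnected, so the ends of `p` are adjacent,
which is absurd for a geodesic with an inner vertex. Applied to a path extracted from the two other sides of a geodesic triangle,
this covers the third side.
-/

namespace SimpleGraph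

variable {V : Type} {G : SimpleGraph V} {u v : V}

theorem Reachable.eq_or_adj_of_adj_trans {W : Type*} {H : SimpleGraph W} {a b : W}
    (htrans : ∀ ⦃a b c⦄, H.Adj a b → H.Adj b c → a ≠ c → H.Adj a c)
    (hab : H.Reachable a b) : a = b ∨ H.Adj a b := by
  obtain ⟨p⟩ := hab
  induction p with
  | nil => exact .inl rfl
  | cons hac _ ih =>
    rcases ih with rfl | hcb
    · exact .inr hac
    · exact or_iff_not_imp_left.mpr (htrans hac hcb)

theorem Walk.IsPath.connected_induce_support_diff_end {p : G.Walk u v} (hp : p.IsPath)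
    (hnil : ¬p.Nil) : (G.induce ({w | w ∈ p.support} \ {v})).Connected := by
  have hnd := hp.support_nodup
  rw [← p.support_dropLast_concat hnil, List.nodup_append] at hnd
  have hv : v ∉ p.dropLast.support := fun h => hnd.2.2 v h v (List.mem_singleton_self v) rfl
  have hset : {w | w ∈ p.support} \ {v} = {w | w ∈ p.dropLast.support} := by
    ext w
    rw [← p.support_dropLast_concat hnil]
    simp only [Set.mem_sdiff, Set.mem_ofPred_eq, List.mem_append, List.mem_singleton,
      Set.mem_singleton_iff]
    constructor
    · rintro ⟨h | h, hw⟩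
      exacts [h, absurd h hw]
    · exact fun h => ⟨.inl h, by rintro rfl; exact hv h⟩
  rw [hset]
  exact p.dropLast.connected_induce_support

theorem Walk.IsPath.start_notMem_support_tail {p : G.Walk u v} (hp : p.IsPath) :
    u ∉ p.support.tail := by
  have hnd := hp.support_nodup
  rw [← p.cons_tail_support, List.nodup_cons] at hnd
  exact hnd.1

theorem Walk.IsCycle.connNoCutVertex {c : G.Walk u u} (hc : c.IsCycle) :
    ConnNoCutVertex G {w | w ∈ c.support} := by
  classical
  refine ⟨c.connected_induce_support, fun v hv => ?_⟩
  have hrot : (c.rotate v hv).IsCycle := hc.rotate hv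
  have hset : {w | w ∈ c.support} \ {v} = {w | w ∈ (c.rotate v hv).tail.support} \ {v} := by
    ext w
    simp only [Set.mem_sdiff, Set.mem_ofPred_eq, Set.mem_singleton_iff,
      ← c.mem_support_rotate_iff v hv, ← cons_support_tail hrot.not_nil, List.mem_cons]
    tauto
  rw [hset]
  refine hrot.isPath_tail.connected_induce_support_diff_end ?_
  have := hrot.three_le_length
  rw [← length_eq_zero_iff, length_tail]
  omega

end SimpleGraph

open SimpleGraph

section Geodesic

variable {V : Type} {G : SimpleGraph V} {u v : V}

theorem IsGeodesic.isPath_s10 {p : G.Walk u v} (hp : IsGeodesic G p) : p.IsPath :=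
  p.isPath_of_length_eq_dist hp

theorem IsGeodesic.of_isSubwalk_s10 {u' v' : V} {p : G.Walk u v} {q : G.Walk u' v'}
    (hp : IsGeodesic G p) (hq : q.IsSubwalk p) : IsGeodesic G q :=
  length_eq_dist_of_subwalk hp hq

theorem IsGeodesic.reverse {p : G.Walk u v} (hp : IsGeodesic G p) : IsGeodesic G p.reverse := by
  rw [IsGeodesic, Walk.length_reverse, hp, dist_comm]

theorem isGeodesic_nil : IsGeodesic G (Walk.nil : G.Walk u u) := by
  simp [IsGeodesic]

theorem isGeodesic_toWalk (h : G.Adj u v) : IsGeodesic G h.toWalk := by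
  simp [IsGeodesic, dist_eq_one_iff_adj.mpr h]

end Geodesic

section Slim

variable {V : Type} {G : SimpleGraph V}

theorem isSlim_zero_iff : IsSlim G 0 ↔
    ∀ (x y z : V) (pxy : G.Walk x y) (pxz : G.Walk x z) (pyz : G.Walk y z),
      IsGeodesic G pxy → IsGeodesic G pxz → IsGeodesic G pyz →
      ∀ u ∈ pxy.support, u ∈ pxz.support ∨ u ∈ pyz.support := by
  classical
  constructor
  · intro h x y z pxy pxz pyz hxy hxz hyz u hu
    obtain ⟨v, hv, huv⟩ := h x y z pxy pxz pyz hxy hxz hyz u hu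
    have hxv : G.Reachable x v := by
      rcases hv with hv | hv
      exacts [(pxz.takeUntil v hv).reachable, pxy.reachable.trans (pyz.takeUntil v hv).reachable]
    have hxu : G.Reachable x u := (pxy.takeUntil u hu).reachable
    rwa [(hxu.symm.trans hxv).dist_eq_zero_iff.mp (Nat.le_zero.mp huv)]
  · intro h x y z pxy pxz pyz hxy hxz hyz u hu
    exact ⟨u, h x y z pxy pxz pyz hxy hxz hyz u hu, by simp⟩

theorem isSlim_card [Fintype V] : IsSlim G (Fintype.card V) := by
  classical
  intro x y z pxy pxz _ _ _ _ u hu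
  refine ⟨x, .inl pxz.start_mem_support, ?_⟩
  calc G.dist u x ≤ (pxy.takeUntil u hu).reverse.bypass.length := dist_le _
    _ ≤ Fintype.card V := (Walk.bypass_isPath _).length_lt.le

theorem slimness_eq_zero_iff [Fintype V] : slimness G = 0 ↔ IsSlim G 0 := by
  have hne : {δ | IsSlim G δ}.Nonempty := ⟨Fintype.card V, isSlim_card⟩
  rw [slimness, Nat.sInf_eq_zero, or_iff_left hne.ne_empty, Set.mem_ofPred_eq]

theorem IsSlim.mem_support_of_adj_of_adj (h0 : IsSlim G 0) {x y z : V} (hxz : G.Adj x z)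
    (hzy : G.Adj z y) (hxy : ¬G.Adj x y) (hne : x ≠ y) {p : G.Walk x y} (hp : IsGeodesic G p) :
    z ∈ p.support := by
  have hnil : ¬p.Nil := fun h => hne h.eq
  have hsnd := isSlim_zero_iff.mp h0 x y z p hxz.toWalk hzy.symm.toWalk hp (isGeodesic_toWalk _)
    (isGeodesic_toWalk _) p.snd (p.getVert_mem_support 1)
  have hadj : G.Adj x p.snd := p.adj_snd hnil
  simp only [Adj.support_toWalk, List.mem_cons, List.not_mem_nil, or_false] at hsnd
  rcases hsnd with (h | h) | (h | h)
  · exact absurd (h ▸ hadj) G.irrefl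
  · exact h ▸ p.getVert_mem_support 1
  · exact absurd (h ▸ hadj) hxy
  · exact h ▸ p.getVert_mem_support 1

theorem IsSlim.mem_support_of_forall_isGeodesic (h0 : IsSlim G 0) {x y z : V} (q : G.Walk x y)
    (hz : ∀ p : G.Walk x y, IsGeodesic G p → z ∈ p.support) : z ∈ q.support := by
  induction q with
  | nil => exact hz _ isGeodesic_nil
  | @cons x c y hxc q ih =>
    by_cases hc : ∀ p : G.Walk c y, IsGeodesic G p → z ∈ p.support
    · exact List.mem_cons_of_mem x (ih hc)
    push Not at hc
    obtain ⟨w, hw, hzw⟩ := hc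
    obtain ⟨p, hp⟩ := (Walk.cons hxc q).reachable.exists_walk_length_eq_dist
    -- the triangle with sides `p`, the edge `x c` and `w` forces `z ∈ {x, c}`
    have hz' := isSlim_zero_iff.mp h0 x y c p hxc.toWalk w.reverse hp (isGeodesic_toWalk hxc)
      hw.reverse z (hz p hp)
    simp only [Adj.support_toWalk, Walk.support_reverse, List.mem_reverse, List.mem_cons,
      List.not_mem_nil, or_false] at hz'
    rcases hz' with (rfl | rfl) | h
    · exact q.support.mem_cons_self
    · exact List.mem_cons_of_mem _ q.start_mem_support
    · exact absurd h hzw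

theorem IsSlim.adj_of_adj_of_adj (h0 : IsSlim G 0) {B : Set V} (hB : ConnNoCutVertex G B)
    {a c d : V} (ha : a ∈ B) (hc : c ∈ B) (hd : d ∈ B) (hac : G.Adj a c) (hcd : G.Adj c d)
    (had : a ≠ d) : G.Adj a d := by
  by_contra hnad
  obtain ⟨w⟩ := (hB.2 c hc).preconnected ⟨a, ha, hac.ne⟩ ⟨d, hd, hcd.ne.symm⟩
  have hcw := h0.mem_support_of_forall_isGeodesic (w.map (Embedding.induce _).toHom)
    fun p hp => h0.mem_support_of_adj_of_adj hac hcd hnad had hp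
  obtain ⟨t, -, ht⟩ := List.mem_map.mp ((Walk.support_map _ _).symm ▸ hcw)
  exact t.2.2 ht

theorem IsSlim.isClique_of_connNoCutVertex (h0 : IsSlim G 0) {B : Set V}
    (hB : ConnNoCutVertex G B) : G.IsClique B := by
  intro x hx y hy hxy
  have htrans : ∀ ⦃a b c : B⦄, (G.induce B).Adj a b → (G.induce B).Adj b c → a ≠ c →
      (G.induce B).Adj a c := fun a b c hab hbc hac =>
    h0.adj_of_adj_of_adj hB a.2 b.2 c.2 hab hbc (Subtype.coe_injective.ne hac)
  exact ((hB.1.preconnected ⟨x, hx⟩ ⟨y, hy⟩).eq_or_adj_of_adj_trans htrans).resolve_left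
    (Subtype.coe_injective.ne_iff.mp hxy)

end Slim

section BlockGraph

variable {V : Type} {G : SimpleGraph V}

theorem forall_connNoCutVertex_isClique_iff [Finite V] :
    (∀ S : Set V, ConnNoCutVertex G S → G.IsClique S) ↔
      ∀ B : Set V, IsBlockSet G B → G.IsClique B := by
  refine ⟨fun h B hB => h B hB.1, fun h S hS => ?_⟩
  obtain ⟨B, ⟨hSB, hB⟩, hmax⟩ := Set.Finite.exists_maximalFor id
    {B : Set V | S ⊆ B ∧ ConnNoCutVertex G B} (Set.toFinite _) ⟨S, subset_rfl, hS⟩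
  have hblock : IsBlockSet G B :=
    ⟨hB, fun B' hBB' hB' => le_antisymm hBB' (hmax ⟨hSB.trans hBB', hB'⟩ hBB')⟩
  exact (h B hblock).subset hSB

theorem IsGeodesic.support_subset_of_isPath
    (hcl : ∀ S : Set V, ConnNoCutVertex G S → G.IsClique S) {x y : V} {p q : G.Walk x y}
    (hp : IsGeodesic G p) (hq : q.IsPath) : p.support ⊆ q.support := by
  classical
  induction hn : q.length using Nat.strong_induction_on generalizing x y with
  | _ n ih =>
  intro u hu
  by_contra huq
  have hux : u ≠ x := fun h => huq (h ▸ q.start_mem_support)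
  have huy : u ≠ y := fun h => huq (h ▸ q.end_mem_support)
  have hlong : 1 < p.length := by
    have h1 := p.length_takeUntil_lt_length hu huy
    have h2 : (p.takeUntil u hu).length ≠ 0 := fun h => hux (Walk.eq_of_length_eq_zero h).symm
    omega
  by_cases hw : ∃ w ∈ p.support, w ∈ q.support ∧ w ≠ x ∧ w ≠ y
  · obtain ⟨w, hwp, hwq, hwx, hwy⟩ := hw
    rw [← p.take_spec hwp, Walk.mem_support_append_iff] at hu
    rcases hu with hu | hu
    · exact huq <| q.support_takeUntil_subset_support hwq <|
        ih _ (hn ▸ q.length_takeUntil_lt_length hwq hwy)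
          (hp.of_isSubwalk_s10 (p.isSubwalk_takeUntil hwp)) (hq.takeUntil hwq) rfl hu
    · exact huq <| q.support_dropUntil_subset_support hwq <|
        ih _ (hn ▸ q.length_dropUntil_lt_length hwq hwx)
          (hp.of_isSubwalk_s10 (p.isSubwalk_dropUntil hwp)) (hq.dropUntil hwq) rfl hu
  push Not at hw
  have hdisj : p.support.tail.Disjoint q.reverse.support.tail := by
    intro w hwp hwq
    have hwq' : w ∈ q.support := by simpa using List.mem_of_mem_tail hwq
    by_cases hwx : w = x
    · exact hp.isPath_s10.start_notMem_support_tail (hwx ▸ hwp)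
    · exact hq.reverse.start_notMem_support_tail
        (hw w (List.mem_of_mem_tail hwp) hwq' hwx ▸ hwq)
  have hcyc := hp.isPath_s10.isCycle_append hq.reverse hdisj (.inl hlong)
  have hxy : x ≠ y := by
    rintro rfl
    have : p.length = 0 := hp.trans (dist_self)
    omega
  have hadj : G.Adj x y := hcl _ hcyc.connNoCutVertex
    (by simp) (by simp [Walk.mem_support_append_iff]) hxy
  have : p.length = 1 := hp.trans (dist_eq_one_iff_adj.mpr hadj)
  omega

theorem isSlim_zero_of_forall_connNoCutVertex_isClique
    (hcl : ∀ S : Set V, ConnNoCutVertex G S → G.IsClique S) : IsSlim G 0 := by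
  classical
  refine isSlim_zero_iff.mpr fun x y z pxy pxz pyz hxy _ _ u hu => ?_
  have hu' := (pxz.append pyz.reverse).support_bypass_subset_support <|
    hxy.support_subset_of_isPath hcl (Walk.bypass_isPath _) hu
  simpa [Walk.mem_support_append_iff] using hu'

theorem isSlim_zero_iff_forall_connNoCutVertex_isClique :
    IsSlim G 0 ↔ ∀ S : Set V, ConnNoCutVertex G S → G.IsClique S :=
  ⟨fun h0 _ => h0.isClique_of_connNoCutVertex, isSlim_zero_of_forall_connNoCutVertex_isClique⟩

end BlockGraph

theorem slimness_eq_zero_iff_blockGraph_general {V : Type} [Fintype V] (G : SimpleGraph V) :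
    slimness G = 0 ↔ ∀ B : Set V, IsBlockSet G B → G.IsClique B := by
  rw [slimness_eq_zero_iff, isSlim_zero_iff_forall_connNoCutVertex_isClique,
    forall_connNoCutVertex_isClique_iff]

/-- A finite connected graph has slimness `0` if and only if it is a block graph,
i.e., every block (maximal biconnected subgraph) of `G` is a clique. -/
theorem slimness_eq_zero_iff_blockGraph {V : Type} [Fintype V] (G : SimpleGraph V)
    (hG : G.Connected) :
    slimness G = 0 ↔ ∀ B : Set V, IsBlockSet G B → G.IsClique B :=
  slimness_eq_zero_iff_blockGraph_general G
end

section
/- If G has slimness 0, then G contains neither a diamond (K_4 minus an edge) nor any cycle C_k with k ≥ 4 as an isometric subgraph. -/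
open SimpleGraph

/-- `f` realizes `H` as an isometric subgraph of `G`: `f` is injective, maps edges of `H`
to edges of `G`, and the distance in `G` between any two images equals the
distance in `H`. -/
def IsIsometricCopy {W V : Type} (H : SimpleGraph W) (G : SimpleGraph V) (f : W → V) : Prop :=
  Function.Injective f ∧ (∀ a b : W, H.Adj a b → G.Adj (f a) (f b)) ∧
  ∀ a b : W, G.dist (f a) (f b) = H.dist a b

/-- The diamond `K₄ - e`: the complete graph on 4 vertices minus one edge. -/
def diamondGraph : SimpleGraph (Fin 4) :=
  (⊤ : SimpleGraph (Fin 4)).deleteEdges {s(0, 1)}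

/-!
In a `0`-slim graph every vertex of a side of a geodesic triangle lies on one of the two other
sides. Since a vertex `w` lies on some geodesic from `x` to `y` exactly when
`d(x,w) + d(w,y) = d(x,y)`, this says metrically that the interval `I(x,y)` is covered by
`I(x,z) ∪ I(y,z)` for all `x y z`, a property inherited by isometric subgraphs. It fails in the
diamond (vertex `2` of `I(0,1)`, with `z = 3`) and in `C_k` for `k ≥ 4` (vertex `1` of `I(0,m)`,
with `m = ⌊k/2⌋` and `z = m + 1`).
-/

section Intervals

variable {V W : Type}

def geodesicInterval (G : SimpleGraph V) (x y : V) : Set V :=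
  {w | G.dist x w + G.dist w y = G.dist x y}

def IntervalsCoverTriangles (G : SimpleGraph V) : Prop :=
  ∀ x y z : V, geodesicInterval G x y ⊆ geodesicInterval G x z ∪ geodesicInterval G y z

lemma isSlim_of_forall_dist_le {G : SimpleGraph V} {δ : ℕ} (h : ∀ u v, G.dist u v ≤ δ) :
    IsSlim G δ :=
  fun x _ _ _ pxz _ _ _ _ u _ ↦ ⟨x, Or.inl pxz.start_mem_support, h u x⟩

lemma isSlim_zero_of_slimness_eq_zero [Finite V] {G : SimpleGraph V} (hG : G.Connected)
    (h : slimness G = 0) : IsSlim G 0 := by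
  have : Nonempty V := hG.nonempty
  have hdiam : IsSlim G G.diam :=
    isSlim_of_forall_dist_le fun _ _ ↦ dist_le_diam (connected_iff_ediam_ne_top.mp hG)
  rcases Nat.sInf_eq_zero.mp h with h | h
  · exact h
  · exact (Set.eq_empty_iff_forall_notMem.mp h _ hdiam).elim

lemma IsGeodesic.dist_add_dist_eq {G : SimpleGraph V} {x y u : V} {p : G.Walk x y}
    (hp : IsGeodesic G p) (hu : u ∈ p.support) : G.dist x u + G.dist u y = G.dist x y := by
  classical
  have hsplit := congrArg Walk.length (p.take_spec hu)
  rw [Walk.length_append] at hsplit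
  have hxu := dist_le (p.takeUntil u hu)
  have huy := dist_le (p.dropUntil u hu)
  have htri := (p.takeUntil u hu).reachable.dist_triangle_left y
  rw [IsGeodesic] at hp
  omega

lemma exists_isGeodesic_mem_support {G : SimpleGraph V} {x y w : V} (hxw : G.Reachable x w)
    (hwy : G.Reachable w y) (hw : w ∈ geodesicInterval G x y) :
    ∃ p : G.Walk x y, IsGeodesic G p ∧ w ∈ p.support := by
  obtain ⟨p, hp⟩ := hxw.exists_walk_length_eq_dist
  obtain ⟨q, hq⟩ := hwy.exists_walk_length_eq_dist
  refine ⟨p.append q, ?_, (Walk.mem_support_append_iff _ _).mpr (Or.inl p.end_mem_support)⟩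
  rw [IsGeodesic, Walk.length_append, hp, hq]
  exact hw

lemma IsSlim.intervalsCoverTriangles {G : SimpleGraph V} (hS : IsSlim G 0)
    (hG : G.Connected) : IntervalsCoverTriangles G := by
  intro x y z w hw
  obtain ⟨p, hp, hwp⟩ := exists_isGeodesic_mem_support (hG x w) (hG w y) hw
  obtain ⟨q, hq⟩ := (hG x z).exists_walk_length_eq_dist
  obtain ⟨r, hr⟩ := (hG y z).exists_walk_length_eq_dist
  obtain ⟨v, hv, hwv⟩ := hS x y z p q r hp hq hr w hwp
  obtain rfl : w = v := hG.dist_eq_zero_iff.mp (Nat.le_zero.mp hwv)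
  exact hv.imp (IsGeodesic.dist_add_dist_eq hq) (IsGeodesic.dist_add_dist_eq hr)

lemma IntervalsCoverTriangles.of_isIsometricCopy {H : SimpleGraph W} {G : SimpleGraph V}
    {f : W → V} (hG : IntervalsCoverTriangles G) (hf : IsIsometricCopy H G f) :
    IntervalsCoverTriangles H := by
  intro a b c w hw
  simpa only [geodesicInterval, Set.mem_union, Set.mem_ofPred_eq, hf.2.2] using
    hG (f a) (f b) (f c)
      (show f w ∈ geodesicInterval G (f a) (f b) by
        simpa only [geodesicInterval, Set.mem_ofPred_eq, hf.2.2] using hw)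

end Intervals

lemma diamondGraph_dist_zero_one : diamondGraph.dist 0 1 = 2 := by
  have h02 : diamondGraph.Adj 0 2 := by simp [diamondGraph]
  have h21 : diamondGraph.Adj 2 1 := by simp [diamondGraph]
  have hle := dist_le (.cons h02 (.cons h21 .nil))
  have hlt := (h02.reachable.trans h21.reachable).one_lt_dist_of_ne_of_not_adj
    (by decide) (by simp [diamondGraph])
  simp only [Walk.length_cons, Walk.length_nil] at hle
  omega

lemma diamondGraph_dist_of_ne {a b : Fin 4} (hab : a ≠ b) (h01 : s(a, b) ≠ s(0, 1)) :
    diamondGraph.dist a b = 1 :=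
  dist_eq_one_iff_adj.mpr (by simp [diamondGraph, hab, h01])

lemma not_intervalsCoverTriangles_diamondGraph : ¬ IntervalsCoverTriangles diamondGraph := by
  intro h
  have h2 : (2 : Fin 4) ∈ geodesicInterval diamondGraph 0 1 := by
    simp (disch := decide) only [geodesicInterval, Set.mem_ofPred_eq,
      diamondGraph_dist_zero_one, diamondGraph_dist_of_ne]
  have := h 0 1 3 h2
  simp (disch := decide) only [geodesicInterval, Set.mem_union, Set.mem_ofPred_eq,
    diamondGraph_dist_of_ne] at this
  omega

lemma Fin.val_sub_eq_ite {n : ℕ} (a b : Fin n) :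
    (a - b).val = if b.val ≤ a.val then a.val - b.val else n + a.val - b.val := by
  split_ifs with h
  · exact Fin.sub_val_of_le h
  · exact Fin.coe_sub_iff_lt.mpr (not_le.mp h)

section CycleGraph

variable {k : ℕ}

lemma cycleGraph_adj_mk_succ {i : ℕ} (hi : i + 1 < k) :
    (cycleGraph k).Adj ⟨i, by omega⟩ ⟨i + 1, hi⟩ := by
  rw [cycleGraph_adj', Fin.val_sub_eq_ite, Fin.val_sub_eq_ite]
  dsimp only
  split_ifs <;> omega

lemma cycleGraph_adj_last_zero (hk : 2 ≤ k) :
    (cycleGraph k).Adj ⟨k - 1, by omega⟩ ⟨0, by omega⟩ := by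
  rw [cycleGraph_adj', Fin.val_sub_eq_ite, Fin.val_sub_eq_ite]
  dsimp only
  split_ifs <;> omega

lemma cycleGraph_dist_mk_le {a b : ℕ} (ha : a < k) (hb : b < k) (hab : a ≤ b) :
    (cycleGraph k).dist ⟨a, ha⟩ ⟨b, hb⟩ ≤ b - a := by
  induction b, hab using Nat.le_induction with
  | base => simp
  | succ b hab ih =>
    calc (cycleGraph k).dist ⟨a, ha⟩ ⟨b + 1, hb⟩
        ≤ (cycleGraph k).dist ⟨a, ha⟩ ⟨b, by omega⟩ +
            (cycleGraph k).dist ⟨b, by omega⟩ ⟨b + 1, hb⟩ :=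
          (cycleGraph_preconnected _ _).dist_triangle_left _
      _ ≤ (b - a) + 1 :=
          add_le_add (ih _) (dist_eq_one_iff_adj.mpr (cycleGraph_adj_mk_succ hb)).le
      _ = b + 1 - a := by omega

lemma cycleGraph_dist_le_val_sub (u v : Fin k) : (cycleGraph k).dist u v ≤ (v - u).val := by
  rw [Fin.val_sub_eq_ite]
  split_ifs with h
  · exact cycleGraph_dist_mk_le u.2 v.2 h
  · have hk : 2 ≤ k := by omega
    let last : Fin k := ⟨k - 1, by omega⟩
    let zero : Fin k := ⟨0, by omega⟩
    have hu : (cycleGraph k).dist u last ≤ k - 1 - u := cycleGraph_dist_mk_le u.2 _ (by omega)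
    have hwrap : (cycleGraph k).dist last zero ≤ 1 :=
      (dist_eq_one_iff_adj.mpr (cycleGraph_adj_last_zero hk)).le
    have hv : (cycleGraph k).dist zero v ≤ v - 0 := cycleGraph_dist_mk_le _ v.2 (by omega)
    have h₁ := (cycleGraph_preconnected u last).dist_triangle_left v
    have h₂ := (cycleGraph_preconnected last zero).dist_triangle_left v
    omega

lemma cycleGraph_min_val_sub_le_length {u v : Fin k} (p : (cycleGraph k).Walk u v) :
    min (v - u).val (u - v).val ≤ p.length := by
  induction p with
  | nil => simp [Fin.val_sub_eq_ite]
  | cons hadj p ih =>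
    rw [cycleGraph_adj'] at hadj
    simp only [Walk.length_cons, Fin.val_sub_eq_ite] at hadj ih ⊢
    split_ifs at hadj ih ⊢ <;> omega

theorem cycleGraph_dist (u v : Fin k) :
    (cycleGraph k).dist u v = min (v - u).val (u - v).val := by
  refine le_antisymm (le_min (cycleGraph_dist_le_val_sub u v) ?_) ?_
  · exact dist_comm (G := cycleGraph k) ▸ cycleGraph_dist_le_val_sub v u
  · obtain ⟨p, hp⟩ := (cycleGraph_preconnected u v).exists_walk_length_eq_dist
    exact hp ▸ cycleGraph_min_val_sub_le_length p

lemma not_intervalsCoverTriangles_cycleGraph (hk : 4 ≤ k) :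
    ¬ IntervalsCoverTriangles (cycleGraph k) := by
  intro h
  have h1 : (⟨1, by omega⟩ : Fin k) ∈
      geodesicInterval (cycleGraph k) ⟨0, by omega⟩ ⟨k / 2, by omega⟩ := by
    simp only [geodesicInterval, Set.mem_ofPred_eq, cycleGraph_dist, Fin.val_sub_eq_ite]
    split_ifs <;> omega
  have := h _ _ ⟨k / 2 + 1, by omega⟩ h1
  simp only [geodesicInterval, Set.mem_union, Set.mem_ofPred_eq, cycleGraph_dist,
    Fin.val_sub_eq_ite] at this
  split_ifs at this <;> omega

end CycleGraph

/-- If `G` has slimness `0`, then `G` contains neither a diamond nor any cycle `C_k`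
with `k ≥ 4` as an isometric subgraph. -/
theorem no_isometric_diamond_or_cycle_of_slimness_eq_zero {V : Type} [Fintype V]
    (G : SimpleGraph V) (hG : G.Connected) (h0 : slimness G = 0) :
    (¬ ∃ f : Fin 4 → V, IsIsometricCopy diamondGraph G f) ∧
    ∀ k : ℕ, 4 ≤ k → ¬ ∃ f : Fin k → V, IsIsometricCopy (SimpleGraph.cycleGraph k) G f := by
  have hG' := (isSlim_zero_of_slimness_eq_zero hG h0).intervalsCoverTriangles hG
  exact ⟨fun ⟨_, hf⟩ ↦ not_intervalsCoverTriangles_diamondGraph (hG'.of_isIsometricCopy hf),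
    fun _ hk ⟨_, hf⟩ ↦ not_intervalsCoverTriangles_cycleGraph hk (hG'.of_isIsometricCopy hf)⟩
end

section
/- Let G be a finite connected simple 4-chordal graph, let x be a vertex and uv an edge of G with d_G(u,x) = d_G(v,x). Then G contains, as an isometric subgraph, a building B(w|uv) — a chain of k ≥ 0 four-cycles ending with a triangle with apex w, whose outermost edge is uv — where the apex w lies in I(x,u) ∩ I(x,v), the set of vertices on shortest paths between x and u and between x and v. -/
open SimpleGraph

/-- The interval `I(u,v)`: all vertices lying on shortest paths between `u` and `v`. -/
def interval {V : Type} (G : SimpleGraph V) (u v : V) : Set V :=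
  {z : V | G.dist u z + G.dist z v = G.dist u v}

/-- The building `B(w|uv)` made of a chain of `k` four-cycles ending with a triangle:
vertices `u_0, …, u_k` (the `some (Sum.inl i)`), `v_0, …, v_k` (the `some (Sum.inr i)`)
and the apex `w = none`; edges `u_i u_{i+1}`, `v_i v_{i+1}`, the rungs `u_i v_i`,
and the triangle edges `u_k w`, `v_k w`. The outermost edge is `u_0 v_0`. -/
def buildingGraph (k : ℕ) : SimpleGraph (Option (Fin (k + 1) ⊕ Fin (k + 1))) :=
  SimpleGraph.fromRel fun a b =>
    match a, b with
    | some (Sum.inl i), some (Sum.inl j) => (j : ℕ) = (i : ℕ) + 1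
    | some (Sum.inr i), some (Sum.inr j) => (j : ℕ) = (i : ℕ) + 1
    | some (Sum.inl i), some (Sum.inr j) => i = j
    | some (Sum.inl i), none => (i : ℕ) = k
    | some (Sum.inr i), none => (i : ℕ) = k
    | _, _ => False

/-!
Call a building `B(w|uv)` levelled if its rung `u_i v_i` lies at distance `d(x,u) - i` from `x`
and its apex one level below the last rung. Levelled buildings exist by induction on `d(x,u)`:
if `u` and `v` have no common neighbour one level down, take geodesics from `u` and `v` to `x`;
at their first contact they close a chordless cycle, which 4-chordality limits to length 4, so
there is a rung one level down. Take a levelled building with the fewest squares. Levels alone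
bound every distance in `G` from below by the distance in the building, except for the pairs
`u_i, v_j`, where they only give `|i - j|`; and a shortcut `d(u_i, v_j) = |i - j|` would, by the
same cycle argument, produce an apex closing a building with fewer squares. So the building is
isometric, and since the distance to `x` drops by one along it, its apex lies in
`I(x,u) ∩ I(x,v)`.
-/

section

variable {V : Type} {G : SimpleGraph V}

def chainWalk (c : ℕ → V) : (m : ℕ) → (∀ i < m, G.Adj (c i) (c (i + 1))) → G.Walk (c 0) (c m)
  | 0, _ => .nil
  | m + 1, h => (chainWalk c m fun i hi => h i (by omega)).concat (h m (by omega))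

theorem chainWalk_length (c : ℕ → V) (m : ℕ) (h : ∀ i < m, G.Adj (c i) (c (i + 1))) :
    (chainWalk c m h).length = m := by
  induction m with
  | zero => rfl
  | succ m ih => simp [chainWalk, ih]

theorem chainWalk_support (c : ℕ → V) (m : ℕ) (h : ∀ i < m, G.Adj (c i) (c (i + 1))) :
    (chainWalk c m h).support = (List.range (m + 1)).map c := by
  induction m with
  | zero => simp [chainWalk]
  | succ m ih => simp [chainWalk, ih, List.range_succ (n := m + 1)]

theorem chainWalk_edges (c : ℕ → V) (m : ℕ) (h : ∀ i < m, G.Adj (c i) (c (i + 1))) :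
    (chainWalk c m h).edges = (List.range m).map fun i => s(c i, c (i + 1)) := by
  induction m with
  | zero => simp [chainWalk]
  | succ m ih => simp [chainWalk, ih, List.range_succ (n := m)]

theorem KChordal.le_four_of_cycle (hch : KChordal G 4) {c : ℕ → V} {l : ℕ} (hl : 2 ≤ l)
    (hadj : ∀ i < l, G.Adj (c i) (c (i + 1))) (hclose : G.Adj (c l) (c 0))
    (hinj : Set.InjOn c (Set.Iic l))
    (hchord : ∀ i j, i < j → j ≤ l → G.Adj (c i) (c j) → j = i + 1 ∨ (i = 0 ∧ j = l)) :
    l + 1 ≤ 4 := by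
  set P := chainWalk c l hadj
  have hsupp : ∀ y, y ∈ (Walk.cons hclose P).support ↔ ∃ i ≤ l, c i = y := by
    simp only [Walk.support_cons, P, chainWalk_support, List.mem_cons, List.mem_map,
      List.mem_range, Nat.lt_succ_iff]
    exact fun y => ⟨by rintro (rfl | h); exacts [⟨l, le_rfl, rfl⟩, h], Or.inr⟩
  have hedge : ∀ i < l, s(c i, c (i + 1)) ∈ (Walk.cons hclose P).edges := by
    intro i hi
    simp only [Walk.edges_cons, P, chainWalk_edges]
    exact List.mem_cons_of_mem _ (List.mem_map.2 ⟨i, List.mem_range.2 hi, rfl⟩)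
  have hcycle : (Walk.cons hclose P).IsCycle := by
    rw [Walk.cons_isCycle_iff, Walk.isPath_def, chainWalk_support, chainWalk_edges]
    refine ⟨(List.nodup_range).map_on fun i hi j hj h => hinj ?_ ?_ h, ?_⟩
    · simpa [Nat.lt_succ_iff] using hi
    · simpa [Nat.lt_succ_iff] using hj
    · simp only [List.mem_map, List.mem_range, not_exists, not_and]
      intro i hi h
      rcases Sym2.eq_iff.1 h with ⟨h1, -⟩ | ⟨h1, h2⟩
      · have := hinj (by simp; omega) (by simp) h1; omega
      · have := hinj (by simp; omega) (by simp) h1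
        have := hinj (by simp; omega) (by simp) h2
        omega
  have hchordless : ∀ i j, i < j → j ≤ l → G.Adj (c i) (c j) →
      s(c i, c j) ∈ (Walk.cons hclose P).edges := by
    intro i j hij hj h
    rcases hchord i j hij hj h with rfl | ⟨rfl, rfl⟩
    · exact hedge i (by omega)
    · simp [Sym2.eq_swap]
  have := hch _ _ ⟨hcycle, fun y z hy hz hyz => ?_⟩
  · simpa [P, chainWalk_length] using this
  obtain ⟨i, hi, rfl⟩ := (hsupp y).1 hy
  obtain ⟨j, hj, rfl⟩ := (hsupp z).1 hz
  rcases lt_trichotomy i j with hij | rfl | hij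
  · exact hchordless i j hij hj hyz
  · exact absurd hyz (G.loopless.irrefl _)
  · rw [Sym2.eq_swap]; exact hchordless j i hij hi hyz.symm

theorem SimpleGraph.Connected.level_le_level_add_dist (hG : G.Connected) {x y z : V} {p q n : ℕ}
    (hy : G.dist x y + p = n) (hz : G.dist x z + q = n) : p ≤ q + G.dist y z := by
  have := hG.dist_triangle (u := x) (v := y) (w := z)
  omega

theorem SimpleGraph.Connected.level_le_level_add_one (hG : G.Connected) {x y z : V} {p q n : ℕ}
    (hy : G.dist x y + p = n) (hz : G.dist x z + q = n) (h : G.Adj y z) : p ≤ q + 1 := by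
  simpa [dist_eq_one_iff_adj.2 h] using hG.level_le_level_add_dist hy hz

theorem exists_walk_of_chain {c : ℕ → V} {i j : ℕ} (hij : i ≤ j)
    (h : ∀ t, i ≤ t → t < j → G.Adj (c t) (c (t + 1))) :
    ∃ p : G.Walk (c i) (c j), p.length = j - i := by
  have hshift : ∀ t < j - i, G.Adj (c (i + t)) (c (i + t + 1)) :=
    fun t ht => h _ (by omega) (by omega)
  exact ⟨(chainWalk (fun t => c (i + t)) (j - i) hshift).copy (by simp)
    (by rw [Nat.add_sub_cancel' hij]), by simp [chainWalk_length]⟩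

theorem dist_le_of_chain {c : ℕ → V} {i j : ℕ} (hij : i ≤ j)
    (h : ∀ t, i ≤ t → t < j → G.Adj (c t) (c (t + 1))) : G.dist (c i) (c j) ≤ j - i := by
  obtain ⟨p, hp⟩ := exists_walk_of_chain hij h
  exact hp ▸ dist_le p

def IsDescendingChain (G : SimpleGraph V) (x : V) (c : ℕ → V) (m n : ℕ) : Prop :=
  (∀ i < m, G.Adj (c i) (c (i + 1))) ∧ ∀ i ≤ m, G.dist x (c i) + i = n

namespace IsDescendingChain

variable {x : V} {c d : ℕ → V} {m n : ℕ}

theorem mono (h : IsDescendingChain G x c m n) {m' : ℕ} (hm : m' ≤ m) :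
    IsDescendingChain G x c m' n :=
  ⟨fun i hi => h.1 i (by omega), fun i hi => h.2 i (by omega)⟩

theorem shift (h : IsDescendingChain G x c m n) {r : ℕ} (hr : r ≤ m) :
    IsDescendingChain G x (fun t => c (r + t)) (m - r) (n - r) := by
  refine ⟨fun i hi => h.1 (r + i) (by omega), fun i hi => ?_⟩
  have := h.2 (r + i) (by omega)
  show G.dist x (c (r + i)) + i = n - r
  omega

theorem append (hc : IsDescendingChain G x c m n) {m' : ℕ}
    (hd : IsDescendingChain G x d m' (n - m)) (h : c m = d 0) :
    IsDescendingChain G x (fun t => if t ≤ m then c t else d (t - m)) (m + m') n := by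
  have hm := hc.2 m le_rfl
  refine ⟨fun i hi => ?_, fun i hi => ?_⟩
  · by_cases him : i < m
    · simpa [him.le, Nat.succ_le_of_lt him] using hc.1 i him
    by_cases him' : i = m
    · subst him'
      simpa [h] using hd.1 0 (by omega)
    · simp only [show ¬ i ≤ m by omega, show ¬ i + 1 ≤ m by omega, if_false,
        show i + 1 - m = i - m + 1 by omega]
      exact hd.1 (i - m) (by omega)
  · by_cases him : i ≤ m
    · simpa [him] using hc.2 i him
    · have := hd.2 (i - m) (by omega)
      simp only [him, if_false]
      omega

theorem cons (h : IsDescendingChain G x c m n) {y : V} (hy : G.Adj y (c 0))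
    (hyl : G.dist x y = n + 1) :
    IsDescendingChain G x (fun t => if t = 0 then y else c (t - 1)) (m + 1) (n + 1) := by
  refine ⟨fun i hi => ?_, fun i hi => ?_⟩
  · rcases i with _ | i
    · simpa using hy
    · simpa using h.1 i (by omega)
  · rcases i with _ | i
    · simpa using hyl
    · simpa [← add_assoc] using h.2 i (by omega)

end IsDescendingChain

theorem exists_isDescendingChain (hG : G.Connected) {x y z : V}
    (h : G.dist y z + G.dist x z = G.dist x y) :
    ∃ c, c 0 = y ∧ c (G.dist y z) = z ∧
      IsDescendingChain G x c (G.dist y z) (G.dist x y) := by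
  obtain ⟨p, hp⟩ := hG.exists_walk_length_eq_dist y z
  have hadj : ∀ i, i < G.dist y z → G.Adj (p.getVert i) (p.getVert (i + 1)) :=
    fun i hi => p.adj_getVert_succ (by omega)
  have hend : p.getVert (G.dist y z) = z := by rw [← hp, p.getVert_length]
  refine ⟨p.getVert, p.getVert_zero, hend, fun i hi => hadj i hi, fun i hi => ?_⟩
  have h1 := dist_le_of_chain (c := p.getVert) (Nat.zero_le i) fun t _ ht => hadj t (by omega)
  have h2 := dist_le_of_chain (c := p.getVert) hi fun t _ ht => hadj t ht
  have h3 := hG.dist_triangle (u := x) (v := p.getVert i) (w := y)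
  have h4 := hG.dist_triangle (u := x) (v := z) (w := p.getVert i)
  rw [p.getVert_zero, dist_comm] at h1
  rw [hend, dist_comm] at h2
  omega

section Ladder

variable {x : V} {a b : ℕ → V} {s t n : ℕ}

theorem ladder_length_le (hG : G.Connected) (hch : KChordal G 4)
    (ha : IsDescendingChain G x a s n) (hb : IsDescendingChain G x b t n)
    (h0 : G.Adj (a 0) (b 0)) (hst : G.Adj (a s) (b t))
    (hno : ∀ i ≤ s, ∀ j ≤ t, 0 < i + j → i + j < s + t → a i ≠ b j ∧ ¬ G.Adj (a i) (b j)) :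
    s + t ≤ 2 := by
  have hne : ∀ i ≤ s, ∀ j ≤ t, a i ≠ b j := by
    intro i hi j hj
    rcases Nat.eq_zero_or_pos (i + j) with h | h
    · obtain ⟨rfl, rfl⟩ : i = 0 ∧ j = 0 := by omega
      exact h0.ne
    rcases Nat.lt_or_ge (i + j) (s + t) with h' | h'
    · exact (hno i hi j hj h h').1
    · obtain ⟨rfl, rfl⟩ : i = s ∧ j = t := by omega
      exact hst.ne
  have hadj : ∀ i ≤ s, ∀ j ≤ t, G.Adj (a i) (b j) → (i = 0 ∧ j = 0) ∨ (i = s ∧ j = t) := by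
    intro i hi j hj h
    by_contra! hij
    exact (hno i hi j hj (by omega) (by omega)).2 h
  -- the cycle `a 0, …, a s, b t, …, b 0`; a chord inside one chain would skip a level
  set c : ℕ → V := fun i => if i ≤ s then a i else b (s + t + 1 - i)
  have hca : ∀ i ≤ s, c i = a i := fun i hi => if_pos hi
  have hcb : ∀ i, s < i → c i = b (s + t + 1 - i) := fun i hi => if_neg (by omega)
  by_contra! hlong
  have := hch.le_four_of_cycle (c := c) (l := s + t + 1) (by omega) ?_ ?_ ?_ ?_
  · omega
  · intro i hi
    rcases lt_trichotomy i s with his | rfl | his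
    · rw [hca i his.le, hca (i + 1) his]; exact ha.1 i his
    · rw [hca i le_rfl, hcb (i + 1) (by omega), show i + t + 1 - (i + 1) = t by omega]
      exact hst
    · rw [hcb i his, hcb (i + 1) (by omega), show s + t + 1 - i = s + t + 1 - (i + 1) + 1 by omega]
      exact (hb.1 _ (by omega)).symm
  · rw [hca 0 (by omega), hcb _ (by omega), Nat.sub_self]
    exact h0.symm
  · intro i hi j hj h
    simp only [Set.mem_Iic] at hi hj
    by_cases his : i ≤ s <;> by_cases hjs : j ≤ s
    · rw [hca i his, hca j hjs] at h
      have hi' := ha.2 i his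
      rw [h] at hi'
      have := ha.2 j hjs
      omega
    · rw [hca i his, hcb j (by omega)] at h
      exact absurd h (hne i his _ (by omega))
    · rw [hcb i (by omega), hca j hjs] at h
      exact absurd h.symm (hne j hjs _ (by omega))
    · rw [hcb i (by omega), hcb j (by omega)] at h
      have hi' := hb.2 (s + t + 1 - i) (by omega)
      rw [h] at hi'
      have := hb.2 (s + t + 1 - j) (by omega)
      omega
  · intro i j hij hj h
    by_cases hjs : j ≤ s
    · rw [hca i (by omega), hca j hjs] at h
      have := hG.level_le_level_add_one (ha.2 j hjs) (ha.2 i (by omega)) h.symm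
      omega
    by_cases his : i ≤ s
    · rw [hca i his, hcb j (by omega)] at h
      rcases hadj i his _ (by omega) h with ⟨rfl, _⟩ | ⟨rfl, _⟩ <;> omega
    · rw [hcb i (by omega), hcb j (by omega)] at h
      have := hG.level_le_level_add_one (hb.2 _ (by omega)) (hb.2 _ (by omega)) h
      omega

theorem exists_adj_of_contact (hG : G.Connected) (hch : KChordal G 4)
    (ha : IsDescendingChain G x a s n) (hb : IsDescendingChain G x b t n)
    (h0 : G.Adj (a 0) (b 0)) {i j : ℕ} (hi : i ≤ s) (hj : j ≤ t) (hij : 0 < i + j)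
    (hcontact : a i = b j ∨ G.Adj (a i) (b j)) :
    G.Adj (a 1) (b 0) ∨ G.Adj (a 0) (b 1) ∨ G.Adj (a 1) (b 1) := by
  classical
  -- a contact with `i + j` minimal closes a chordless ladder
  have hP : ∃ d, ∃ i ≤ s, ∃ j ≤ t, 0 < i + j ∧ i + j = d ∧ (a i = b j ∨ G.Adj (a i) (b j)) :=
    ⟨_, i, hi, j, hj, hij, rfl, hcontact⟩
  obtain ⟨i, hi, j, hj, hij, hd, hcontact⟩ := Nat.find_spec hP
  have hmin : ∀ i' ≤ s, ∀ j' ≤ t, 0 < i' + j' → i' + j' < i + j →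
      a i' ≠ b j' ∧ ¬ G.Adj (a i') (b j') := by
    intro i' hi' j' hj' h h'
    have := Nat.find_min hP (m := i' + j') (by omega)
    push Not at this
    exact this i' hi' j' hj' h rfl
  have hadj : G.Adj (a i) (b j) := by
    refine hcontact.resolve_left fun he => ?_
    have hai := ha.2 i hi
    rw [he] at hai
    obtain rfl : i = j := by have := hb.2 j hj; omega
    have hprev := hb.1 (i - 1) (by omega)
    rw [show i - 1 + 1 = i by omega, ← he] at hprev
    exact (hmin i hi (i - 1) (by omega) (by omega) (by omega)).2 hprev.symm
  have hsum := ladder_length_le hG hch (ha.mono hi) (hb.mono hj) h0 hadj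
    fun i' hi' j' hj' => hmin i' (by omega) j' (by omega)
  have h1 := hG.level_le_level_add_one (ha.2 i hi) (hb.2 j hj) hadj
  have h2 := hG.level_le_level_add_one (hb.2 j hj) (ha.2 i hi) hadj.symm
  rcases (by omega : (i = 1 ∧ j = 0) ∨ (i = 0 ∧ j = 1) ∨ (i = 1 ∧ j = 1)) with
    ⟨rfl, rfl⟩ | ⟨rfl, rfl⟩ | ⟨rfl, rfl⟩
  · exact Or.inl hadj
  · exact Or.inr (Or.inl hadj)
  · exact Or.inr (Or.inr hadj)

end Ladder

theorem exists_rung_of_forall_not_apex (hG : G.Connected) (hch : KChordal G 4) {x u v : V} {n : ℕ}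
    (huv : G.Adj u v) (hu : G.dist x u = n + 1) (hv : G.dist x v = n + 1)
    (hno : ∀ w, G.Adj u w → G.Adj v w → G.dist x w ≠ n) :
    ∃ a b, G.Adj u a ∧ G.Adj v b ∧ G.Adj a b ∧ G.dist x a = n ∧ G.dist x b = n := by
  have geodesic : ∀ y, G.dist x y = n + 1 → ∃ c, c 0 = y ∧ c (n + 1) = x ∧
      IsDescendingChain G x c (n + 1) (n + 1) := by
    intro y hy
    obtain ⟨c, hc0, hc, hchain⟩ := exists_isDescendingChain hG (x := x) (y := y) (z := x)
      (by rw [dist_self, dist_comm]; rfl)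
    rw [dist_comm, hy] at hc hchain
    exact ⟨c, hc0, hc, hchain⟩
  obtain ⟨A, hA0, hAx, hA⟩ := geodesic u hu
  obtain ⟨B, hB0, hBx, hB⟩ := geodesic v hv
  have hA1 : G.dist x (A 1) = n := by have := hA.2 1 (by omega); omega
  have hB1 : G.dist x (B 1) = n := by have := hB.2 1 (by omega); omega
  have huA := hA.1 0 (by omega)
  have hvB := hB.1 0 (by omega)
  rw [hA0] at huA
  rw [hB0] at hvB
  rcases exists_adj_of_contact hG hch hA hB (hA0 ▸ hB0 ▸ huv) le_rfl le_rfl (by omega)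
    (Or.inl (hAx.trans hBx.symm)) with h | h | h
  · exact absurd hA1 (hno _ huA (hB0 ▸ h.symm))
  · exact absurd hB1 (hno _ (hA0 ▸ h) hvB)
  · exact ⟨A 1, B 1, huA, hvB, h, hA1, hB1⟩

theorem SimpleGraph.Hom.dist_map_le {W : Type} {H : SimpleGraph W} (f : H →g G) {p q : W}
    (h : H.Reachable p q) : G.dist (f p) (f q) ≤ H.dist p q := by
  obtain ⟨w, hw⟩ := h.exists_walk_length_eq_dist
  simpa [hw] using dist_le (w.map f)

section BuildingGraph

variable {k : ℕ}

def buildingHeight (k : ℕ) : Option (Fin (k + 1) ⊕ Fin (k + 1)) → ℕ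
  | none => k + 1
  | some (Sum.inl i) => i
  | some (Sum.inr i) => i

def buildingDist (k : ℕ) : Option (Fin (k + 1) ⊕ Fin (k + 1)) → Option (Fin (k + 1) ⊕ Fin (k + 1)) → ℕ
  | some (Sum.inl i), some (Sum.inr j) => Nat.dist i j + 1
  | some (Sum.inr i), some (Sum.inl j) => Nat.dist i j + 1
  | p, q => Nat.dist (buildingHeight k p) (buildingHeight k q)

theorem buildingGraph_dist_side_le {σ : Fin (k + 1) → Fin (k + 1) ⊕ Fin (k + 1)}
    (hσ : σ = Sum.inl ∨ σ = Sum.inr) {i j : Fin (k + 1)} (hij : i ≤ j) :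
    (buildingGraph k).Reachable (some (σ i)) (some (σ j)) ∧
      (buildingGraph k).dist (some (σ i)) (some (σ j)) ≤ j - i := by
  obtain ⟨p, hp⟩ := exists_walk_of_chain (G := buildingGraph k)
    (c := fun t => some (σ (Fin.ofNat (k + 1) t))) (Fin.le_iff_val_le_val.1 hij) fun t _ ht => by
      have h1 : t % (k + 1) = t := Nat.mod_eq_of_lt (by omega)
      have h2 : (t + 1) % (k + 1) = t + 1 := Nat.mod_eq_of_lt (by omega)
      rcases hσ with rfl | rfl <;> simp [buildingGraph, Fin.ext_iff, h1, h2]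
  exact ⟨by simpa using p.reachable, by simpa [hp] using dist_le p⟩

theorem buildingGraph_connected : (buildingGraph k).Connected := by
  have hw : ∀ p, (buildingGraph k).Reachable p none := by
    rintro (_ | i | i)
    · rfl
    · exact (buildingGraph_dist_side_le (Or.inl rfl) (Fin.le_last i)).1.trans
        (Adj.reachable (by simp [buildingGraph]))
    · exact (buildingGraph_dist_side_le (Or.inr rfl) (Fin.le_last i)).1.trans
        (Adj.reachable (by simp [buildingGraph]))
  exact ⟨fun p q => (hw p).trans (hw q).symm⟩

theorem buildingGraph_dist_le (p q : Option (Fin (k + 1) ⊕ Fin (k + 1))) :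
    (buildingGraph k).dist p q ≤ buildingDist k p q := by
  have hconn : (buildingGraph k).Connected := buildingGraph_connected
  have side : ∀ σ : Fin (k + 1) → Fin (k + 1) ⊕ Fin (k + 1), (σ = Sum.inl ∨ σ = Sum.inr) →
      ∀ i j, (buildingGraph k).dist (some (σ i)) (some (σ j)) ≤ Nat.dist i j := by
    intro σ hσ i j
    rcases le_total i j with hij | hij
    · have := (buildingGraph_dist_side_le hσ hij).2
      unfold Nat.dist; omega
    · have := (buildingGraph_dist_side_le hσ hij).2
      rw [SimpleGraph.dist_comm]; unfold Nat.dist; omega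
  have apex : ∀ σ : Fin (k + 1) → Fin (k + 1) ⊕ Fin (k + 1), (σ = Sum.inl ∨ σ = Sum.inr) →
      ∀ i, (buildingGraph k).dist (some (σ i)) none ≤ k + 1 - i := by
    intro σ hσ i
    have h1 := (buildingGraph_dist_side_le hσ (Fin.le_last i)).2
    have h2 := hconn.dist_triangle (u := some (σ i)) (v := some (σ (Fin.last k))) (w := none)
    have h3 : (buildingGraph k).dist (some (σ (Fin.last k))) none = 1 :=
      dist_eq_one_iff_adj.2 (by rcases hσ with rfl | rfl <;> simp [buildingGraph])
    simp only [Fin.val_last] at h1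
    omega
  have cross : ∀ i j,
      (buildingGraph k).dist (some (Sum.inl i)) (some (Sum.inr j)) ≤ Nat.dist i j + 1 := by
    intro i j
    have h1 := side _ (Or.inl rfl) i j
    have h2 := hconn.dist_triangle (u := some (Sum.inl i)) (v := some (Sum.inl j))
      (w := some (Sum.inr j))
    have h3 : (buildingGraph k).dist (some (Sum.inl j)) (some (Sum.inr j)) = 1 :=
      dist_eq_one_iff_adj.2 (by simp [buildingGraph])
    omega
  rcases p with _ | i | i <;> rcases q with _ | j | j <;>
    simp only [buildingDist, buildingHeight] <;> unfold Nat.dist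
  · simp
  · have := apex _ (Or.inl rfl) j; rw [SimpleGraph.dist_comm]; omega
  · have := apex _ (Or.inr rfl) j; rw [SimpleGraph.dist_comm]; omega
  · have := apex _ (Or.inl rfl) i; omega
  · exact side _ (Or.inl rfl) i j
  · exact cross i j
  · have := apex _ (Or.inr rfl) i; omega
  · have := cross j i; rw [SimpleGraph.dist_comm]; unfold Nat.dist at this; omega
  · exact side _ (Or.inr rfl) i j

end BuildingGraph

/-- A levelled building `B(w|uv)`, with `u_i = a i` and `v_i = b i`. -/
structure LevelBuilding (G : SimpleGraph V) (x u v : V) (n : ℕ) where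
  k : ℕ
  a : ℕ → V
  b : ℕ → V
  w : V
  a_zero : a 0 = u
  b_zero : b 0 = v
  chain_a : IsDescendingChain G x a k n
  chain_b : IsDescendingChain G x b k n
  rung : ∀ i ≤ k, G.Adj (a i) (b i)
  adj_a_w : G.Adj (a k) w
  adj_b_w : G.Adj (b k) w
  dist_w : G.dist x w + (k + 1) = n

namespace LevelBuilding

variable {x u v : V} {n : ℕ}

def symm (B : LevelBuilding G x u v n) : LevelBuilding G x v u n :=
  ⟨B.k, B.b, B.a, B.w, B.b_zero, B.a_zero, B.chain_b, B.chain_a, fun i hi => (B.rung i hi).symm,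
    B.adj_b_w, B.adj_a_w, B.dist_w⟩

def ofApex {w : V} (huv : G.Adj u v) (huw : G.Adj u w) (hvw : G.Adj v w)
    (hu : G.dist x u = n + 1) (hv : G.dist x v = n + 1) (hw : G.dist x w = n) :
    LevelBuilding G x u v (n + 1) :=
  ⟨0, fun _ => u, fun _ => v, w, rfl, rfl, ⟨by simp, by simpa⟩, ⟨by simp, by simpa⟩,
    fun _ _ => huv, huw, hvw, by omega⟩

def cons {a b : V} (B : LevelBuilding G x a b n) (huv : G.Adj u v) (hua : G.Adj u a)
    (hvb : G.Adj v b) (hu : G.dist x u = n + 1) (hv : G.dist x v = n + 1) :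
    LevelBuilding G x u v (n + 1) where
  k := B.k + 1
  a t := if t = 0 then u else B.a (t - 1)
  b t := if t = 0 then v else B.b (t - 1)
  w := B.w
  a_zero := rfl
  b_zero := rfl
  chain_a := B.chain_a.cons (by rwa [B.a_zero]) hu
  chain_b := B.chain_b.cons (by rwa [B.b_zero]) hv
  rung i hi := by
    rcases i with _ | i
    · exact huv
    · simpa using B.rung i (by omega)
  adj_a_w := by simpa using B.adj_a_w
  adj_b_w := by simpa using B.adj_b_w
  dist_w := by have := B.dist_w; omega

theorem nonempty (hG : G.Connected) (hch : KChordal G 4) (huv : G.Adj u v)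
    (hu : G.dist x u = n) (hv : G.dist x v = n) : Nonempty (LevelBuilding G x u v n) := by
  induction n generalizing u v with
  | zero =>
    rw [hG.dist_eq_zero_iff] at hu hv
    exact absurd (hu.symm.trans hv) huv.ne
  | succ n ih =>
    by_cases hapex : ∃ w, G.Adj u w ∧ G.Adj v w ∧ G.dist x w = n
    · obtain ⟨w, huw, hvw, hw⟩ := hapex
      exact ⟨ofApex huv huw hvw hu hv hw⟩
    · push Not at hapex
      obtain ⟨a, b, hua, hvb, hab, ha, hb⟩ :=
        exists_rung_of_forall_not_apex hG hch huv hu hv hapex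
      obtain ⟨B⟩ := ih hab ha hb
      exact ⟨B.cons huv hua hvb hu hv⟩

def IsMinimal (B : LevelBuilding G x u v n) : Prop :=
  ∀ B' : LevelBuilding G x u v n, B.k ≤ B'.k

theorem exists_isMinimal (h : Nonempty (LevelBuilding G x u v n)) :
    ∃ B : LevelBuilding G x u v n, B.IsMinimal := by
  obtain ⟨B, -, hB⟩ := (InvImage.wf (fun B : LevelBuilding G x u v n => B.k)
    wellFounded_lt).has_min Set.univ Set.univ_nonempty
  exact ⟨B, fun B' => not_lt.1 (hB B' trivial)⟩

variable {B : LevelBuilding G x u v n}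

theorem IsMinimal.symm (hB : B.IsMinimal) : B.symm.IsMinimal :=
  fun B' => hB B'.symm

theorem IsMinimal.k_le_of_apex (hB : B.IsMinimal) {i r : ℕ} {p : ℕ → V} {y : V}
    (hir : i + r ≤ B.k) (hp0 : p 0 = B.a i) (hp : IsDescendingChain G x p r (n - i))
    (hrung : ∀ s ≤ r, G.Adj (p s) (B.b (i + s))) (hy : G.Adj (p r) y)
    (hy' : G.Adj (B.b (i + r)) y) (hyl : G.dist x y + (i + r + 1) = n) : B.k ≤ i + r := by
  have hpr : (if i + r ≤ i then B.a (i + r) else p (i + r - i)) = p r := by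
    rcases Nat.eq_zero_or_pos r with rfl | hr
    · simp [hp0]
    · simp [show ¬ i + r ≤ i by omega]
  refine hB ⟨i + r, _, B.b, y, by simp [B.a_zero], B.b_zero,
    (B.chain_a.mono (by omega)).append hp hp0.symm, B.chain_b.mono hir, fun t ht => ?_,
    by rw [hpr]; exact hy, hy', by omega⟩
  by_cases hti : t ≤ i
  · simpa [hti] using B.rung t (by omega)
  · simpa [hti, Nat.add_sub_cancel' (by omega : i ≤ t)] using hrung (t - i) (by omega)

theorem IsMinimal.dist_a_b_ne (hG : G.Connected) (hch : KChordal G 4) (hB : B.IsMinimal)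
    {i j : ℕ} (hij : i ≤ j) (hj : j ≤ B.k) : G.dist (B.a i) (B.b j) ≠ j - i := by
  classical
  -- Follow a geodesic `p` from `a i` to `b j` while it stays joined to the `b`-chain by rungs;
  -- where it leaves, the contact lemma supplies an apex for a building with fewer squares.
  intro hd
  have hai := B.chain_a.2 i (by omega)
  have hbj := B.chain_b.2 j hj
  obtain ⟨p, hp0, hpj, hp⟩ := exists_isDescendingChain hG (x := x) (y := B.a i) (z := B.b j)
    (by omega)
  rw [hd] at hpj hp
  rw [show G.dist x (B.a i) = n - i by omega] at hp
  have hQ : ∃ r, r ≤ j - i ∧ ¬ G.Adj (p r) (B.b (i + r)) :=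
    ⟨j - i, le_rfl, by rw [hpj, Nat.add_sub_cancel' hij]; exact G.loopless.irrefl _⟩
  obtain ⟨hr₁, hnext⟩ := Nat.find_spec hQ
  obtain ⟨r, hr⟩ : ∃ r, Nat.find hQ = r + 1 := by
    refine Nat.exists_eq_succ_of_ne_zero fun h0 => ?_
    rw [h0, hp0] at hnext
    exact hnext (B.rung i (by omega))
  rw [hr] at hr₁ hnext
  have hrung : ∀ s ≤ r, G.Adj (p s) (B.b (i + s)) := fun s hs => by
    have := Nat.find_min hQ (m := s) (by omega)
    push Not at this
    exact this (by omega)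
  have hapex : ∀ y, G.Adj (p r) y → G.Adj (B.b (i + r)) y →
      G.dist x y + (i + r + 1) = n → False := fun y hy hy' hyl => by
    have := hB.k_le_of_apex (by omega) hp0 (hp.mono (by omega)) hrung hy hy' hyl
    omega
  have hb := (B.chain_b.shift (r := i + r) (by omega)).mono (m' := j - i - r) (by omega)
  rw [← Nat.sub_sub] at hb
  rcases exists_adj_of_contact hG hch (hp.shift (r := r) (by omega)) hb (hrung r le_rfl)
    (i := j - i - r) (j := j - i - r) le_rfl le_rfl (by omega)
    (Or.inl (by
      show p (r + (j - i - r)) = B.b (i + r + (j - i - r))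
      rw [show r + (j - i - r) = j - i by omega, show i + r + (j - i - r) = j by omega, hpj]))
    with h | h | h
  · have := hp.2 (r + 1) hr₁
    exact hapex _ (hp.1 r (by omega)) h.symm (by omega)
  · have := B.chain_b.2 (i + r + 1) (by omega)
    exact hapex _ h (B.chain_b.1 (i + r) (by omega)) (by omega)
  · exact hnext h

def toHom (B : LevelBuilding G x u v n) : buildingGraph B.k →g G where
  toFun
    | none => B.w
    | some (Sum.inl i) => B.a i
    | some (Sum.inr i) => B.b i
  map_rel' {p q} h := by
    rcases p with _ | i | i <;> rcases q with _ | j | j <;> simp [buildingGraph] at h ⊢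
    · rw [h]; exact B.adj_a_w.symm
    · rw [h]; exact B.adj_b_w.symm
    · rw [h]; exact B.adj_a_w
    · rcases h.2 with h | h <;> rw [h]
      exacts [B.chain_a.1 i (by omega), (B.chain_a.1 j (by omega)).symm]
    · rw [h]; exact B.rung _ (by omega)
    · rw [h]; exact B.adj_b_w
    · rw [h]; exact (B.rung _ (by omega)).symm
    · rcases h.2 with h | h <;> rw [h]
      exacts [B.chain_b.1 i (by omega), (B.chain_b.1 j (by omega)).symm]

@[simp] theorem toHom_inl (B : LevelBuilding G x u v n) (i : Fin (B.k + 1)) :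
    B.toHom (some (Sum.inl i)) = B.a i := rfl

@[simp] theorem toHom_inr (B : LevelBuilding G x u v n) (i : Fin (B.k + 1)) :
    B.toHom (some (Sum.inr i)) = B.b i := rfl

theorem dist_toHom (B : LevelBuilding G x u v n) (p : Option (Fin (B.k + 1) ⊕ Fin (B.k + 1))) :
    G.dist x (B.toHom p) + buildingHeight B.k p = n := by
  rcases p with _ | i | i
  · exact B.dist_w
  · exact B.chain_a.2 i (by omega)
  · exact B.chain_b.2 i (by omega)

theorem IsMinimal.buildingDist_le (hG : G.Connected)
    (hch : KChordal G 4) (hB : B.IsMinimal) (p q : Option (Fin (B.k + 1) ⊕ Fin (B.k + 1))) :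
    buildingDist B.k p q ≤ G.dist (B.toHom p) (B.toHom q) := by
  have h1 := hG.level_le_level_add_dist (B.dist_toHom p) (B.dist_toHom q)
  have h2 := hG.level_le_level_add_dist (B.dist_toHom q) (B.dist_toHom p)
  rw [SimpleGraph.dist_comm] at h2
  have cross : ∀ i j : Fin (B.k + 1), G.dist (B.a i) (B.b j) ≠ Nat.dist i j := by
    intro i j
    rcases le_total i j with hij | hij
    · have := hB.dist_a_b_ne hG hch hij (by omega)
      unfold Nat.dist; omega
    · have : G.dist (B.b j) (B.a i) ≠ i - j :=
        hB.symm.dist_a_b_ne hG hch hij (show (i : ℕ) ≤ B.k by omega)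
      rw [SimpleGraph.dist_comm]
      unfold Nat.dist; omega
  rcases p with _ | i | i <;> rcases q with _ | j | j <;>
    simp only [buildingDist, buildingHeight] at h1 h2 ⊢
  case some.inl.some.inr =>
    have := cross i j
    simp only [toHom_inl, toHom_inr] at h1 h2 ⊢
    unfold Nat.dist at *; omega
  case some.inr.some.inl =>
    have := cross j i
    simp only [toHom_inl, toHom_inr] at h1 h2 ⊢
    rw [SimpleGraph.dist_comm] at h1 h2 ⊢
    unfold Nat.dist at *; omega
  all_goals unfold Nat.dist; omega

theorem IsMinimal.isIsometricCopy (hG : G.Connected)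
    (hch : KChordal G 4) (hB : B.IsMinimal) : IsIsometricCopy (buildingGraph B.k) G B.toHom := by
  have hconn : (buildingGraph B.k).Connected := buildingGraph_connected
  have hdist : ∀ p q, G.dist (B.toHom p) (B.toHom q) = (buildingGraph B.k).dist p q :=
    fun p q => le_antisymm (B.toHom.dist_map_le (hconn.preconnected p q))
      ((buildingGraph_dist_le p q).trans (hB.buildingDist_le hG hch p q))
  refine ⟨fun p q h => ?_, fun p q => B.toHom.map_adj, hdist⟩
  have := hdist p q
  rw [h, SimpleGraph.dist_self] at this
  exact hconn.dist_eq_zero_iff.1 this.symm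

theorem apex_mem_interval (hG : G.Connected) (B : LevelBuilding G x u v n) :
    B.w ∈ interval G x u := by
  have hchain := dist_le_of_chain (c := B.a) (Nat.zero_le B.k) fun t _ ht => B.chain_a.1 t ht
  have hw : G.dist (B.a B.k) B.w = 1 := dist_eq_one_iff_adj.2 B.adj_a_w
  have h1 := hG.dist_triangle (u := u) (v := B.a B.k) (w := B.w)
  have h2 := hG.dist_triangle (u := x) (v := B.w) (w := u)
  have hu := B.chain_a.2 0 (Nat.zero_le _)
  have := B.dist_w
  rw [B.a_zero] at hchain hu
  show G.dist x B.w + G.dist B.w u = G.dist x u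
  rw [SimpleGraph.dist_comm (u := B.w)] at h2 ⊢
  omega

end LevelBuilding

end

theorem exists_isometric_building_general {V : Type} (G : SimpleGraph V)
    (hG : G.Connected) (hchord : KChordal G 4) (x u v : V) (huv : G.Adj u v)
    (heq : G.dist u x = G.dist v x) :
    ∃ (k : ℕ) (f : Option (Fin (k + 1) ⊕ Fin (k + 1)) → V),
      IsIsometricCopy (buildingGraph k) G f ∧
      f (some (Sum.inl 0)) = u ∧ f (some (Sum.inr 0)) = v ∧
      f none ∈ interval G x u ∩ interval G x v := by
  have hv : G.dist x v = G.dist x u := by rw [dist_comm, ← heq, dist_comm]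
  obtain ⟨B, hB⟩ := LevelBuilding.exists_isMinimal (LevelBuilding.nonempty hG hchord huv rfl hv)
  exact ⟨B.k, B.toHom, hB.isIsometricCopy hG hchord, B.a_zero, B.b_zero,
    B.apex_mem_interval hG, B.symm.apex_mem_interval hG⟩

/-- In a finite connected 4-chordal graph, if the edge `uv` is equidistant from a vertex
`x`, then `G` contains an isometric building `B(w|uv)` whose outermost edge is `uv` and
whose apex `w` lies in `I(x,u) ∩ I(x,v)`. -/
theorem exists_isometric_building {V : Type} [Fintype V] (G : SimpleGraph V)
    (hG : G.Connected) (hchord : KChordal G 4) (x u v : V) (huv : G.Adj u v)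
    (heq : G.dist u x = G.dist v x) :
    ∃ (k : ℕ) (f : Option (Fin (k + 1) ⊕ Fin (k + 1)) → V),
      IsIsometricCopy (buildingGraph k) G f ∧
      f (some (Sum.inl 0)) = u ∧ f (some (Sum.inr 0)) = v ∧
      f none ∈ interval G x u ∩ interval G x v :=
  exists_isometric_building_general G hG hchord x u v huv heq
end

section
/- For every integer k ≥ 1, there exists a finite connected simple graph G with Δ̂(G) = 8k and sl(G) = 4k, where Δ̂(G) is the maximum cluster-diameter over all layering partitions of G. In particular, the bound sl(G) ≤ ⌊Δ̂(G)/2⌋ is sharp. -/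
open SimpleGraph

/-!
The witness is the cycle `C_{16k}`, realised as the circulant graph of `ZMod (16k)` with jump `1`.
Its diameter is `8k`, so no cluster is wider than `8k`, and a vertex on a geodesic of length at
most `8k` is within `4k` of one of its endpoints. Conversely, seen from `0` the vertices `±4k`
form one cluster (joined through the far arc) at distance `8k`, and the two halves of the cycle
between `0` and `8k` form a geodesic bigon whose midpoint `4k` is at distance `4k` from the other
half. Distances on the cycle are bounded below by lifting walks to `ℤ`.
-/

section Slimness

variable {V : Type} {G : SimpleGraph V}

lemma SimpleGraph.Walk.dist_add_dist_le_length_s15 {x y u : V} (p : G.Walk x y)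
    (hu : u ∈ p.support) : G.dist x u + G.dist u y ≤ p.length := by
  classical
  rw [← p.take_spec hu, Walk.length_append]
  exact add_le_add (dist_le _) (dist_le _)

lemma isSlim_of_forall_dist_le_s15 {δ : ℕ} (h : ∀ x y, G.dist x y ≤ 2 * δ) : IsSlim G δ := by
  intro x y z pxy pxz pyz hxy _ _ u hu
  have hsplit := pxy.dist_add_dist_le_length_s15 hu
  have hxy_le := h x y
  rw [IsGeodesic] at hxy
  by_cases hux : G.dist x u ≤ δ
  · exact ⟨x, Or.inl pxz.start_mem_support, by rwa [dist_comm]⟩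
  · exact ⟨y, Or.inr pyz.start_mem_support, by omega⟩

lemma not_isSlim_of_bigon {x y u : V} {δ : ℕ} {p q : G.Walk x y} (hp : IsGeodesic G p)
    (hq : IsGeodesic G q) (hu : u ∈ p.support) (hfar : ∀ v ∈ q.support, δ < G.dist u v) :
    ¬IsSlim G δ := by
  intro hslim
  obtain ⟨v, hv, huv⟩ := hslim x y y p q Walk.nil hp hq (by simp [IsGeodesic]) u hu
  have hvq : v ∈ q.support := by
    rcases hv with hv | hv
    · exact hv
    · rw [Walk.support_nil, List.mem_singleton] at hv
      exact hv ▸ q.end_mem_support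
  exact (hfar v hvq).not_ge huv

lemma slimness_eq {δ : ℕ} (hδ : IsSlim G δ) (hmin : ∀ m < δ, ¬IsSlim G m) :
    slimness G = δ :=
  le_antisymm (Nat.sInf_le hδ) (le_csInf ⟨δ, hδ⟩ fun m hm => not_lt.1 fun hlt => hmin m hlt hm)

end Slimness

section ClusterDiameter

variable {V : Type} [Fintype V] {G : SimpleGraph V}

lemma maxClusterDiam_le {D : ℕ} (h : ∀ u v, G.dist u v ≤ D) : maxClusterDiam G ≤ D :=
  Finset.sup_le fun _ _ => Finset.sup_le fun p _ => by
    split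
    · exact h p.1 p.2
    · exact Nat.zero_le D

lemma SameCluster.dist_le_maxClusterDiam {s u v : V} (h : SameCluster G s u v) :
    G.dist u v ≤ maxClusterDiam G := by
  classical
  calc G.dist u v ≤ clusterDiam G s := by
        refine le_trans ?_ (Finset.le_sup (f := fun p : V × V => _) (Finset.mem_univ (u, v)))
        simp only [if_pos h, le_refl]
    _ ≤ maxClusterDiam G := Finset.le_sup (f := fun s => clusterDiam G s) (Finset.mem_univ s)

end ClusterDiameter

lemma Int.min_le_abs_of_dvd_sub {n d m : ℤ} (hd : 0 ≤ d) (hdn : d ≤ n) (h : n ∣ d - m) :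
    min d (n - d) ≤ |m| := by
  obtain ⟨q, hq⟩ := h
  rcases lt_trichotomy q 0 with hq0 | rfl | hq0
  · exact (min_le_left _ _).trans (le_abs.2 (Or.inl (by nlinarith)))
  · exact (min_le_left _ _).trans (le_abs.2 (Or.inl (by linarith)))
  · exact (min_le_right _ _).trans (le_abs.2 (Or.inr (by nlinarith)))

section Cycle

variable {n : ℕ}

lemma circulantGraph_one_adj_add_one (hn : n ≠ 1) (i : ZMod n) :
    (circulantGraph ({1} : Set (ZMod n))).Adj i (i + 1) := by
  simp [ZMod.one_eq_zero_iff, hn]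

lemma circulantGraph_one_exists_walk (hn : n ≠ 1) {a b : ℕ} (hab : a ≤ b) :
    ∃ p : (circulantGraph ({1} : Set (ZMod n))).Walk a b, p.length = b - a ∧
      ∀ w, w ∈ p.support ↔ ∃ t ∈ Set.Icc a b, w = t := by
  induction b, hab using Nat.le_induction with
  | base => exact ⟨Walk.nil, by simp, fun w => by simp⟩
  | succ b hab ih =>
    obtain ⟨p, hlen, hsupp⟩ := ih
    refine ⟨(p.concat (circulantGraph_one_adj_add_one hn _)).copy rfl (Nat.cast_succ b).symm,
      by simp [hlen]; omega, fun w => ?_⟩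
    rw [Walk.support_copy, Walk.support_concat, List.mem_append, List.mem_singleton, hsupp]
    constructor
    · rintro (⟨t, ⟨hat, htb⟩, rfl⟩ | rfl)
      · exact ⟨t, ⟨hat, by omega⟩, rfl⟩
      · exact ⟨b + 1, ⟨by omega, le_rfl⟩, by push_cast; rfl⟩
    · rintro ⟨t, ⟨hat, htb⟩, rfl⟩
      rcases Nat.lt_or_eq_of_le htb with htb | rfl
      · exact Or.inl ⟨t, ⟨hat, by omega⟩, rfl⟩
      · exact Or.inr (by push_cast; rfl)

lemma circulantGraph_one_exists_intCast_of_walk {i j : ZMod n}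
    (p : (circulantGraph ({1} : Set (ZMod n))).Walk i j) :
    ∃ m : ℤ, |m| ≤ p.length ∧ j = i + m := by
  induction p with
  | nil => exact ⟨0, by simp, by simp⟩
  | cons hadj p ih =>
    obtain ⟨m, hm, hj⟩ := ih
    rw [Walk.length_cons, Nat.cast_succ]
    rcases hadj with ⟨-, h | h⟩
    · refine ⟨m - 1, (abs_sub _ _).trans (by simpa using hm), ?_⟩
      rw [Set.mem_singleton_iff] at h
      rw [hj, Int.cast_sub, Int.cast_one, ← h]; ring
    · refine ⟨m + 1, (abs_add_le _ _).trans (by simpa using hm), ?_⟩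
      rw [Set.mem_singleton_iff] at h
      rw [hj, Int.cast_add, Int.cast_one, ← h]; ring

lemma circulantGraph_one_dist_natCast (hn : n ≠ 1) {a b : ℕ} (hab : a ≤ b) (hba : b ≤ a + n) :
    (circulantGraph ({1} : Set (ZMod n))).dist a b = min (b - a) (n - (b - a)) := by
  obtain ⟨p, hp, -⟩ := circulantGraph_one_exists_walk hn hab
  obtain ⟨q, hq, -⟩ := circulantGraph_one_exists_walk hn hba
  have hwrap : ((a + n : ℕ) : ZMod n) = a := by rw [Nat.cast_add, ZMod.natCast_self, add_zero]
  apply le_antisymm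
  · refine le_min ((dist_le p).trans hp.le) ?_
    rw [dist_comm]
    exact (dist_le (q.copy rfl hwrap)).trans (by simp [hq]; omega)
  · obtain ⟨r, hr⟩ := p.reachable.exists_walk_length_eq_dist
    obtain ⟨m, hm, hbm⟩ := circulantGraph_one_exists_intCast_of_walk r
    have hdvd : (n : ℤ) ∣ ((b - a : ℕ) : ℤ) - m := by
      rw [← ZMod.intCast_zmod_eq_zero_iff_dvd]
      push_cast [hab]
      rw [hbm]
      ring
    have := Int.min_le_abs_of_dvd_sub (by omega) (by omega) hdvd
    rw [← hr]
    omega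

lemma circulantGraph_one_dist_le [NeZero n] (hn : n ≠ 1) (i j : ZMod n) :
    (circulantGraph ({1} : Set (ZMod n))).dist i j ≤ n / 2 := by
  wlog hij : i.val ≤ j.val generalizing i j
  · rw [dist_comm]
    exact this j i (by omega)
  rw [← ZMod.natCast_zmod_val i, ← ZMod.natCast_zmod_val j,
    circulantGraph_one_dist_natCast hn hij (by have := j.val_lt; omega)]
  omega

lemma circulantGraph_one_connected [NeZero n] (hn : n ≠ 1) :
    (circulantGraph ({1} : Set (ZMod n))).Connected := by
  refine (connected_iff _).2 ⟨fun i j => ?_, ⟨0⟩⟩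
  obtain ⟨p, -, -⟩ := circulantGraph_one_exists_walk hn (Nat.le_add_right i.val (j - i).val)
  rw [Nat.cast_add, ZMod.natCast_zmod_val, ZMod.natCast_zmod_val, add_sub_cancel] at p
  exact p.reachable

end Cycle

section FourCycle

variable (d : ℕ) [NeZero d]

theorem maxClusterDiam_circulantGraph_one_four_mul :
    maxClusterDiam (circulantGraph ({1} : Set (ZMod (4 * d)))) = 2 * d := by
  have hd := NeZero.pos d
  have hn : 4 * d ≠ 1 := by omega
  have hdist := @circulantGraph_one_dist_natCast (4 * d) hn
  refine le_antisymm (maxClusterDiam_le fun i j => ?_) ?_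
  · exact (circulantGraph_one_dist_le hn i j).trans (by omega)
  obtain ⟨p, -, hp⟩ := circulantGraph_one_exists_walk hn (show d ≤ 3 * d by omega)
  have hsame : SameCluster (circulantGraph {1}) ((0 : ℕ) : ZMod (4 * d)) d (3 * d : ℕ) := by
    refine ⟨by rw [hdist, hdist] <;> omega, p, fun w hw => ?_⟩
    obtain ⟨t, ⟨hdt, ht⟩, rfl⟩ := (hp w).1 hw
    rw [hdist, hdist] <;> omega
  calc 2 * d = _ := by rw [hdist] <;> omega
    _ ≤ _ := hsame.dist_le_maxClusterDiam

theorem slimness_circulantGraph_one_four_mul :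
    slimness (circulantGraph ({1} : Set (ZMod (4 * d)))) = d := by
  have hd := NeZero.pos d
  have hn : 4 * d ≠ 1 := by omega
  have hdist := @circulantGraph_one_dist_natCast (4 * d) hn
  refine slimness_eq (isSlim_of_forall_dist_le_s15 fun i j =>
    (circulantGraph_one_dist_le hn i j).trans (by omega)) fun m hm => ?_
  obtain ⟨p, hp, hpsupp⟩ := circulantGraph_one_exists_walk hn (Nat.zero_le (2 * d))
  obtain ⟨q, hq, hqsupp⟩ := circulantGraph_one_exists_walk hn (show 2 * d ≤ 4 * d by omega)
  have h0 : ((4 * d : ℕ) : ZMod (4 * d)) = (0 : ℕ) := by rw [ZMod.natCast_self, Nat.cast_zero]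
  have hgeod : IsGeodesic _ p := by rw [IsGeodesic, hp, hdist] <;> omega
  have hgeod' : IsGeodesic _ (q.copy rfl h0).reverse := by
    rw [IsGeodesic, Walk.length_reverse, Walk.length_copy, hq, hdist] <;> omega
  refine not_isSlim_of_bigon hgeod hgeod' ((hpsupp d).2 ⟨d, ⟨by omega, by omega⟩, rfl⟩)
    fun v hv => ?_
  rw [Walk.support_reverse, List.mem_reverse, Walk.support_copy] at hv
  obtain ⟨t, ⟨hdt, ht⟩, rfl⟩ := (hqsupp v).1 hv
  rw [hdist] <;> omega

end FourCycle

/-- For every `k ≥ 1` there is a finite connected graph `G` with `Δ̂(G) = 8k` and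
`sl(G) = 4k`; hence the bound `sl(G) ≤ ⌊Δ̂(G)/2⌋` is sharp. -/
theorem exists_graph_slimness_maxClusterDiam_sharp (k : ℕ) (hk : 1 ≤ k) :
    ∃ (V : Type) (_ : Fintype V) (G : SimpleGraph V),
      G.Connected ∧ maxClusterDiam G = 8 * k ∧ slimness G = 4 * k := by
  have : NeZero (4 * k) := ⟨by omega⟩
  refine ⟨ZMod (4 * (4 * k)), inferInstance, circulantGraph {1},
    circulantGraph_one_connected (by omega), ?_, slimness_circulantGraph_one_four_mul (4 * k)⟩
  rw [maxClusterDiam_circulantGraph_one_four_mul]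
  ring
end
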